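/- arXiv:2104.11006 — 6 statements merged into one kernel-verified Lean document; each statement's English description precedes it below -/
import Mathlib

section
/- Let π be a permutation of P. Then π belongs to G^LP if and only if the linear action of π on ℚ^P maps Null(M) = { v ∈ ℚ^P : x_S^⊤ v = 0 for all S ⊆ {1,…,k} with |S| ≤ t } into itself, equivalently if and only if it maps Row(M) into itself. In other words, G^LP = Aut(Row(M)) ∩ S_{2^k}, the group of coordinate permutations of ℚ^P whose induced linear map preserves the row space of M. -/
/-- The set of points of the 2-level full factorial design, `P = {-1,1}^k`,
with `{-1,1}` encoded as `ℤˣ`. -/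
abbrev DesignPoint (k : ℕ) := Fin k → ℤˣ

/-- The vector `x_S ∈ ℚ^P` given by `(x_S)_p = ∏_{i ∈ S} p_i`.
In particular `xvec k ∅` is the all-ones vector `𝟏`, `xvec k {i}` is the
`i`-th main effect and `xvec k {i,j}` is a two-factor interaction. -/
def xvec (k : ℕ) (S : Finset (Fin k)) (p : DesignPoint k) : ℚ :=
  ∏ i ∈ S, ((p i : ℤ) : ℚ)

/-- The linear action of a permutation of the points on `ℚ^P`: `(π·v)_p = v_{π⁻¹(p)}`. -/
def permVec (k : ℕ) (π : Equiv.Perm (DesignPoint k)) (v : DesignPoint k → ℚ) :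
    DesignPoint k → ℚ :=
  fun p => v (π⁻¹ p)

/-- The LP-relaxation feasible set `F` of the OA(N,k,2,t)-defining ILP,
written in terms of J-characteristics: `f ≥ 0`, `𝟏ᵀf = N`, and `x_Sᵀf = 0`
for all nonempty `S` with `|S| ≤ t`. -/
def feas (k N t : ℕ) : Set (DesignPoint k → ℚ) :=
  {f | (∀ p, 0 ≤ f p) ∧ (∑ p, f p = (N : ℚ)) ∧
    ∀ S : Finset (Fin k), S ≠ ∅ → S.card ≤ t → ∑ p, xvec k S p * f p = 0}

/-- The LP relaxation permutation symmetry group `G^LP`: all permutations of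
the points whose induced linear action maps `F` into itself. -/
def GLP (k N t : ℕ) : Set (Equiv.Perm (DesignPoint k)) :=
  {π | ∀ f ∈ feas k N t, permVec k π f ∈ feas k N t}

section aux

variable {k t : ℕ}

lemma unit_cast_mul_self (u : ℤˣ) : ((u : ℤ) : ℚ) * ((u : ℤ) : ℚ) = 1 := by
  have h : u * u = 1 := Int.units_mul_self u
  have h2 : ((u * u : ℤˣ) : ℤ) = 1 := by rw [h]; rfl
  push_cast at h2
  exact_mod_cast h2

lemma xvec_sq (S : Finset (Fin k)) (p : DesignPoint k) : xvec k S p * xvec k S p = 1 := by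
  unfold xvec
  rw [← Finset.prod_mul_distrib]
  exact Finset.prod_eq_one fun i _ => unit_cast_mul_self (p i)

lemma sum_xvec_eq_zero {S : Finset (Fin k)} (hS : S ≠ ∅) :
    ∑ p : DesignPoint k, xvec k S p = 0 := by
  obtain ⟨i₀, hi₀⟩ := Finset.nonempty_iff_ne_empty.2 hS
  have hinv : Function.Involutive
      (fun p : DesignPoint k => Function.update p i₀ (-(p i₀))) := by
    intro p
    simp [Function.update_idem, Function.update_self]
  let σ := hinv.toPerm
  have h1 : ∑ p : DesignPoint k, xvec k S (σ p) = ∑ p : DesignPoint k, xvec k S p :=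
    Equiv.sum_comp σ _
  have h2 : ∀ p : DesignPoint k, xvec k S (σ p) = - xvec k S p := by
    intro p
    unfold xvec
    rw [← Finset.mul_prod_erase S _ hi₀, ← Finset.mul_prod_erase S _ hi₀]
    have hfac : ∀ i ∈ S.erase i₀, (((σ p) i : ℤ) : ℚ) = ((p i : ℤ) : ℚ) := by
      intro i hi
      have : (σ p) i = p i := Function.update_of_ne (Finset.ne_of_mem_erase hi) _ _
      rw [this]
    rw [Finset.prod_congr rfl hfac]
    have hσ : (σ p) i₀ = -(p i₀) := Function.update_self _ _ _
    rw [hσ]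
    push_cast
    ring
  have h3 := h1
  rw [Finset.sum_congr rfl (fun p _ => h2 p), Finset.sum_neg_distrib] at h3
  linarith

lemma xvec_mul (S T : Finset (Fin k)) (p : DesignPoint k) :
    xvec k S p * xvec k T p = xvec k ((S \ T) ∪ (T \ S)) p := by
  unfold xvec
  have hS : (∏ i ∈ S \ T, ((p i : ℤ) : ℚ)) * ∏ i ∈ S ∩ T, ((p i : ℤ) : ℚ)
      = ∏ i ∈ S, ((p i : ℤ) : ℚ) := by
    rw [← Finset.sdiff_inter_self_left S T]
    exact Finset.prod_sdiff (Finset.inter_subset_left)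
  have hT : (∏ i ∈ T \ S, ((p i : ℤ) : ℚ)) * ∏ i ∈ S ∩ T, ((p i : ℤ) : ℚ)
      = ∏ i ∈ T, ((p i : ℤ) : ℚ) := by
    rw [Finset.inter_comm, ← Finset.sdiff_inter_self_left T S]
    exact Finset.prod_sdiff (Finset.inter_subset_left)
  have hd : Disjoint (S \ T) (T \ S) := disjoint_sdiff_sdiff
  rw [Finset.prod_union hd, ← hS, ← hT]
  have hsq : (∏ i ∈ S ∩ T, ((p i : ℤ) : ℚ)) * ∏ i ∈ S ∩ T, ((p i : ℤ) : ℚ) = 1 := by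
    rw [← Finset.prod_mul_distrib]
    exact Finset.prod_eq_one fun i _ => unit_cast_mul_self (p i)
  calc (∏ i ∈ S \ T, ((p i : ℤ) : ℚ)) * (∏ i ∈ S ∩ T, ((p i : ℤ) : ℚ)) *
        ((∏ i ∈ T \ S, ((p i : ℤ) : ℚ)) * ∏ i ∈ S ∩ T, ((p i : ℤ) : ℚ))
      = (∏ i ∈ S \ T, ((p i : ℤ) : ℚ)) * (∏ i ∈ T \ S, ((p i : ℤ) : ℚ)) *
        ((∏ i ∈ S ∩ T, ((p i : ℤ) : ℚ)) * ∏ i ∈ S ∩ T, ((p i : ℤ) : ℚ)) := by ring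
    _ = (∏ i ∈ S \ T, ((p i : ℤ) : ℚ)) * (∏ i ∈ T \ S, ((p i : ℤ) : ℚ)) := by rw [hsq, mul_one]

noncomputable def Kc (k : ℕ) : ℚ := (Fintype.card (DesignPoint k) : ℚ)

lemma Kc_pos : 0 < Kc k := by
  have h : 0 < Fintype.card (DesignPoint k) := Fintype.card_pos
  simp only [Kc]
  exact_mod_cast h

lemma sum_xvec_mul (S T : Finset (Fin k)) :
    ∑ p : DesignPoint k, xvec k S p * xvec k T p = if S = T then Kc k else 0 := by
  by_cases h : S = T
  · subst h
    simp [xvec_sq, Kc, Finset.card_univ]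
  · rw [if_neg h]
    have hU : (S \ T) ∪ (T \ S) ≠ ∅ := by
      intro hcon
      rw [Finset.union_eq_empty, Finset.sdiff_eq_empty_iff_subset,
        Finset.sdiff_eq_empty_iff_subset] at hcon
      exact h (le_antisymm hcon.1 hcon.2)
    calc ∑ p : DesignPoint k, xvec k S p * xvec k T p
        = ∑ p : DesignPoint k, xvec k ((S \ T) ∪ (T \ S)) p :=
          Finset.sum_congr rfl (fun p _ => xvec_mul S T p)
      _ = 0 := sum_xvec_eq_zero hU

/-- The null space as a submodule. -/
def NullM (k t : ℕ) : Submodule ℚ (DesignPoint k → ℚ) where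
  carrier := {v | ∀ S : Finset (Fin k), S.card ≤ t → ∑ p, xvec k S p * v p = 0}
  add_mem' := by
    intro a b ha hb S hs
    have h1 := ha S hs
    have h2 := hb S hs
    simp only [Pi.add_apply, mul_add, Finset.sum_add_distrib]
    linarith
  zero_mem' := by intro S hs; simp
  smul_mem' := by
    intro c a ha S hs
    simp only [Pi.smul_apply, smul_eq_mul, mul_left_comm, ← Finset.mul_sum, ha S hs, mul_zero]

lemma mem_NullM_iff (v : DesignPoint k → ℚ) :
    v ∈ NullM k t ↔ ∀ S : Finset (Fin k), S.card ≤ t → ∑ p, xvec k S p * v p = 0 :=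
  Iff.rfl

/-- The row space. -/
def RowM (k t : ℕ) : Submodule ℚ (DesignPoint k → ℚ) :=
  Submodule.span ℚ {w : DesignPoint k → ℚ | ∃ S : Finset (Fin k), S.card ≤ t ∧ w = xvec k S}

lemma row_perp_null {w v : DesignPoint k → ℚ} (hw : w ∈ RowM k t) (hv : v ∈ NullM k t) :
    ∑ p, w p * v p = 0 := by
  induction hw using Submodule.span_induction with
  | mem x hx =>
      obtain ⟨S, hSt, rfl⟩ := hx
      exact hv S hSt
  | zero => simp
  | add x y _ _ hx hy =>
      simp only [Pi.add_apply, add_mul, Finset.sum_add_distrib, hx, hy, add_zero]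
  | smul c x _ hx =>
      simp only [Pi.smul_apply, smul_eq_mul, mul_assoc, ← Finset.mul_sum, hx, mul_zero]

noncomputable def projRow (k t : ℕ) (v : DesignPoint k → ℚ) : DesignPoint k → ℚ :=
  ∑ T ∈ Finset.univ.filter (fun S : Finset (Fin k) => S.card ≤ t),
    ((Kc k)⁻¹ * ∑ p, xvec k T p * v p) • xvec k T

lemma projRow_mem (v : DesignPoint k → ℚ) : projRow k t v ∈ RowM k t := by
  apply Submodule.sum_mem
  intro T hT
  apply Submodule.smul_mem
  apply Submodule.subset_span
  exact ⟨T, (Finset.mem_filter.1 hT).2, rfl⟩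

lemma projRow_apply (v : DesignPoint k → ℚ) (p : DesignPoint k) :
    projRow k t v p
      = ∑ T ∈ Finset.univ.filter (fun S : Finset (Fin k) => S.card ≤ t),
          ((Kc k)⁻¹ * ∑ q, xvec k T q * v q) * xvec k T p := by
  simp [projRow, Finset.sum_apply]

lemma sum_xvec_mul_projRow (v : DesignPoint k → ℚ) (S : Finset (Fin k)) (hSt : S.card ≤ t) :
    ∑ p, xvec k S p * projRow k t v p = ∑ q, xvec k S q * v q := by
  calc ∑ p, xvec k S p * projRow k t v p
      = ∑ p, ∑ T ∈ Finset.univ.filter (fun S : Finset (Fin k) => S.card ≤ t),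
          xvec k S p * (((Kc k)⁻¹ * ∑ q, xvec k T q * v q) * xvec k T p) := by
        refine Finset.sum_congr rfl fun p _ => ?_
        rw [projRow_apply]
        exact Finset.mul_sum _ _ _
    _ = ∑ T ∈ Finset.univ.filter (fun S : Finset (Fin k) => S.card ≤ t),
          ((Kc k)⁻¹ * ∑ q, xvec k T q * v q) * ∑ p, xvec k S p * xvec k T p := by
        rw [Finset.sum_comm]
        refine Finset.sum_congr rfl fun T _ => ?_
        rw [Finset.mul_sum Finset.univ (fun p => xvec k S p * xvec k T p)
          ((Kc k)⁻¹ * ∑ q, xvec k T q * v q)]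
        exact Finset.sum_congr rfl fun p _ => by ring
    _ = ∑ q, xvec k S q * v q := by
        rw [Finset.sum_eq_single_of_mem S
          (by simp [Finset.mem_filter, hSt])
          (fun T _ hTS => by rw [sum_xvec_mul, if_neg (fun h => hTS h.symm), mul_zero])]
        rw [sum_xvec_mul, if_pos rfl]
        field_simp [ne_of_gt (Kc_pos (k := k))]

lemma sub_projRow_null (v : DesignPoint k → ℚ) :
    (fun p => v p - projRow k t v p) ∈ NullM k t := by
  intro S hSt
  simp only [mul_sub, Finset.sum_sub_distrib, sum_xvec_mul_projRow v S hSt, sub_self]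

lemma eq_projRow_of_perp {w : DesignPoint k → ℚ}
    (h : ∀ v ∈ NullM k t, ∑ p, w p * v p = 0) : w = projRow k t w := by
  set n : DesignPoint k → ℚ := fun p => w p - projRow k t w p with hn
  have hnnull : n ∈ NullM k t := sub_projRow_null w
  have h1 : ∑ p, w p * n p = 0 := h n hnnull
  have h2 : ∑ p, projRow k t w p * n p = 0 := row_perp_null (projRow_mem w) hnnull
  have h3 : ∑ p, n p * n p = 0 := by
    have he : ∀ p : DesignPoint k, n p * n p = w p * n p - projRow k t w p * n p := by
      intro p; simp only [hn]; ring
    rw [Finset.sum_congr rfl (fun p _ => he p), Finset.sum_sub_distrib, h1, h2, sub_zero]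
  funext p
  have hz := (Finset.sum_eq_zero_iff_of_nonneg
    (fun q _ => mul_self_nonneg (n q))).1 h3 p (Finset.mem_univ p)
  have := mul_self_eq_zero.1 hz
  simp only [hn] at this
  linarith

lemma mem_row_of_perp {w : DesignPoint k → ℚ}
    (h : ∀ v ∈ NullM k t, ∑ p, w p * v p = 0) : w ∈ RowM k t := by
  rw [eq_projRow_of_perp h]
  exact projRow_mem w

lemma row_eq_projRow {w : DesignPoint k → ℚ} (hw : w ∈ RowM k t) : w = projRow k t w :=
  eq_projRow_of_perp (fun v hv => row_perp_null hw hv)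

/-- permVec as a linear equivalence. -/
def permL (k : ℕ) (π : Equiv.Perm (DesignPoint k)) :
    (DesignPoint k → ℚ) ≃ₗ[ℚ] (DesignPoint k → ℚ) :=
  LinearEquiv.funCongrLeft ℚ ℚ (π⁻¹ : Equiv.Perm (DesignPoint k))

lemma permL_apply (π : Equiv.Perm (DesignPoint k)) (v : DesignPoint k → ℚ) :
    permL k π v = permVec k π v := rfl

lemma inv_preserves_submodule (π : Equiv.Perm (DesignPoint k))
    (M : Submodule ℚ (DesignPoint k → ℚ))
    (h : ∀ v ∈ M, permVec k π v ∈ M) :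
    ∀ v ∈ M, permVec k π⁻¹ v ∈ M := by
  have hle : M.map (permL k π).toLinearMap ≤ M := by
    rintro _ ⟨x, hx, rfl⟩
    exact h x hx
  have heq : M.map (permL k π).toLinearMap = M := by
    apply Submodule.eq_of_le_of_finrank_le hle
    rw [LinearEquiv.finrank_map_eq]
  intro v hv
  rw [← heq] at hv
  obtain ⟨x, hx, hxv⟩ := hv
  have hvx : permVec k π⁻¹ v = x := by
    have hveq : v = permVec k π x := by rw [← permL_apply]; exact hxv.symm
    funext p
    rw [hveq]
    simp [permVec]
  rwa [hvx]

end aux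

/-- A permutation `π` of `P` belongs to `G^LP` if and only if its linear
action maps `Null(M)` into itself, equivalently if and only if it maps `Row(M)` into
itself; i.e. `G^LP = Aut(Row(M)) ∩ S_{2^k}`. -/
theorem glp_iff_preserves_null_iff_preserves_row
    (k N t : ℕ) (hk : 1 ≤ k) (hN : 1 ≤ N) (ht1 : 1 ≤ t) (htk : t ≤ k)
    (π : Equiv.Perm (DesignPoint k)) :
    (π ∈ GLP k N t ↔
      ∀ v : DesignPoint k → ℚ,
        (∀ S : Finset (Fin k), S.card ≤ t → ∑ p, xvec k S p * v p = 0) →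
        ∀ S : Finset (Fin k), S.card ≤ t → ∑ p, xvec k S p * permVec k π v p = 0) ∧
    (π ∈ GLP k N t ↔
      ∀ v ∈ Submodule.span ℚ
          {w : DesignPoint k → ℚ | ∃ S : Finset (Fin k), S.card ≤ t ∧ w = xvec k S},
        permVec k π v ∈ Submodule.span ℚ
          {w : DesignPoint k → ℚ | ∃ S : Finset (Fin k), S.card ≤ t ∧ w = xvec k S}) := by
  -- A → B : membership in GLP implies preservation of the null space
  have hAB : π ∈ GLP k N t →
      ∀ v ∈ NullM k t, permVec k π v ∈ NullM k t := by
    intro hA v hv S hSt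
    set c : ℚ := (N : ℚ) / Kc k with hc
    have hcpos : 0 < c := div_pos (by exact_mod_cast hN) Kc_pos
    set m : ℚ := ∑ p, |v p| with hm
    have hmnn : 0 ≤ m := Finset.sum_nonneg (fun p _ => abs_nonneg _)
    set ε : ℚ := c / (1 + m) with hε
    have hεpos : 0 < ε := div_pos hcpos (by linarith)
    set f : DesignPoint k → ℚ := fun p => c + ε * v p with hf
    have hsumv : ∑ p, v p = 0 := by
      have h0 := hv ∅ (by simp)
      simpa [xvec] using h0
    have hcard : ∑ p : DesignPoint k, c = (N : ℚ) := by
      rw [Finset.sum_const, Finset.card_univ, nsmul_eq_mul, hc, Kc]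
      field_simp [show ((Fintype.card (DesignPoint k) : ℚ)) ≠ 0 from
        ne_of_gt (Kc_pos (k := k))]
    have hfeas : f ∈ feas k N t := by
      refine ⟨?_, ?_, ?_⟩
      · intro p
        have habs : |v p| ≤ m := Finset.single_le_sum (fun q _ => abs_nonneg (v q))
          (Finset.mem_univ p)
        have hvp : -(1 + m) ≤ v p := by
          have := neg_abs_le (v p); linarith
        have h1 : -(ε * (1 + m)) ≤ ε * v p := by nlinarith
        have h2 : ε * (1 + m) = c := by
          rw [hε]; field_simp
        simp only [hf]
        linarith
      · simp only [hf]
        rw [Finset.sum_add_distrib, ← Finset.mul_sum, hsumv, mul_zero, add_zero, hcard]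
      · intro T hT hTt
        have e1 : ∑ p, xvec k T p * c = 0 := by
          rw [← Finset.sum_mul, sum_xvec_eq_zero hT, zero_mul]
        have e2 : ∑ p, xvec k T p * (ε * v p) = ε * ∑ p, xvec k T p * v p := by
          rw [Finset.mul_sum]; exact Finset.sum_congr rfl fun p _ => by ring
        simp only [hf, mul_add, Finset.sum_add_distrib, e1, e2, hv T hTt, mul_zero, add_zero]
    have hπf := hA f hfeas
    by_cases hSe : S = ∅
    · subst hSe
      have : ∑ p, permVec k π v p = ∑ p, v p := Equiv.sum_comp π⁻¹ v
      simpa [xvec, this] using hsumv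
    · have h0 := hπf.2.2 S hSe hSt
      have hπfp : ∀ p, permVec k π f p = c + ε * permVec k π v p := fun p => rfl
      have e1 : ∑ p, xvec k S p * c = 0 := by
        rw [← Finset.sum_mul, sum_xvec_eq_zero hSe, zero_mul]
      have e2 : ∑ p, xvec k S p * (ε * permVec k π v p)
          = ε * ∑ p, xvec k S p * permVec k π v p := by
        rw [Finset.mul_sum]; exact Finset.sum_congr rfl fun p _ => by ring
      rw [Finset.sum_congr rfl (fun p _ => by rw [hπfp p]), ] at h0
      simp only [mul_add, Finset.sum_add_distrib, e1, e2, zero_add] at h0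
      exact (mul_eq_zero.1 h0).resolve_left (ne_of_gt hεpos)
  -- B → C : preservation of null space implies preservation of row space
  have hBC : (∀ v ∈ NullM k t, permVec k π v ∈ NullM k t) →
      ∀ v ∈ RowM k t, permVec k π v ∈ RowM k t := by
    intro hB w hw
    have hBinv : ∀ v ∈ NullM k t, permVec k π⁻¹ v ∈ NullM k t :=
      inv_preserves_submodule π _ hB
    apply mem_row_of_perp
    intro u hu
    have hreindex : ∑ p, permVec k π w p * u p = ∑ q, w q * u (π q) := by
      rw [← Equiv.sum_comp π⁻¹ (fun q => w q * u (π q))]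
      refine Finset.sum_congr rfl fun p _ => ?_
      simp [permVec]
    rw [hreindex]
    have heq : ∑ q, w q * u (π q) = ∑ q, w q * permVec k π⁻¹ u q :=
      Finset.sum_congr rfl fun q _ => by simp [permVec]
    rw [heq]
    exact row_perp_null hw (hBinv u hu)
  -- C → A : preservation of row space implies membership in GLP
  have hCA : (∀ v ∈ RowM k t, permVec k π v ∈ RowM k t) → π ∈ GLP k N t := by
    intro hC f hfeas
    have hCinv : ∀ v ∈ RowM k t, permVec k π⁻¹ v ∈ RowM k t :=
      inv_preserves_submodule π _ hC
    refine ⟨fun p => hfeas.1 (π⁻¹ p), ?_, ?_⟩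
    · calc ∑ p, permVec k π f p = ∑ p, f p := Equiv.sum_comp π⁻¹ f
        _ = (N : ℚ) := hfeas.2.1
    · intro S hSe hSt
      set w : DesignPoint k → ℚ := permVec k π⁻¹ (xvec k S) with hwdef
      have hwrow : w ∈ RowM k t :=
        hCinv _ (Submodule.subset_span ⟨S, hSt, rfl⟩)
      have hwp : ∀ q, w q = xvec k S (π q) := by intro q; simp [hwdef, permVec]
      have hreindex : ∑ p, xvec k S p * permVec k π f p = ∑ q, w q * f q := by
        rw [← Equiv.sum_comp π⁻¹ (fun q => w q * f q)]
        refine Finset.sum_congr rfl fun p _ => ?_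
        simp [hwp, permVec]
      rw [hreindex, row_eq_projRow hwrow]
      have hproj : ∀ q, projRow k t w q
          = ∑ T ∈ Finset.univ.filter (fun S : Finset (Fin k) => S.card ≤ t),
              ((Kc k)⁻¹ * ∑ r, xvec k T r * w r) * xvec k T q := projRow_apply w
      calc ∑ q, projRow k t w q * f q
          = ∑ q, ∑ T ∈ Finset.univ.filter (fun S : Finset (Fin k) => S.card ≤ t),
              ((Kc k)⁻¹ * ∑ r, xvec k T r * w r) * xvec k T q * f q := by
            refine Finset.sum_congr rfl fun q _ => ?_
            rw [hproj q]
            exact Finset.sum_mul _ _ _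
        _ = ∑ T ∈ Finset.univ.filter (fun S : Finset (Fin k) => S.card ≤ t),
              ((Kc k)⁻¹ * ∑ r, xvec k T r * w r) * ∑ q, xvec k T q * f q := by
            rw [Finset.sum_comm]
            refine Finset.sum_congr rfl fun T _ => ?_
            rw [Finset.mul_sum Finset.univ (fun q => xvec k T q * f q)
              ((Kc k)⁻¹ * ∑ r, xvec k T r * w r)]
            exact Finset.sum_congr rfl fun q _ => by ring
        _ = 0 := by
            apply Finset.sum_eq_zero
            intro T hT
            by_cases hTe : T = ∅
            · subst hTe
              have hs : ∑ r, xvec k (∅ : Finset (Fin k)) r * w r = 0 := by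
                have : ∑ r, w r = 0 := by
                  rw [Finset.sum_congr rfl (fun r _ => hwp r)]
                  rw [Equiv.sum_comp π (xvec k S)]
                  exact sum_xvec_eq_zero hSe
                simpa [xvec] using this
              rw [hs, mul_zero, zero_mul]
            · rw [hfeas.2.2 T hTe (Finset.mem_filter.1 hT).2, mul_zero]
  -- assemble
  have hABiff : π ∈ GLP k N t ↔ ∀ v ∈ NullM k t, permVec k π v ∈ NullM k t :=
    ⟨hAB, fun hB => hCA (hBC hB)⟩
  have hACiff : π ∈ GLP k N t ↔ ∀ v ∈ RowM k t, permVec k π v ∈ RowM k t :=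
    ⟨fun hA => hBC (hAB hA), hCA⟩
  constructor
  · exact hABiff
  · exact hACiff
end

section
/- Let π be a permutation of P and for i = 1, …, k set x'_i = π·x_i (the vector obtained from the i-th full factorial column by permuting its entries by π). Then there exists a permutation σ ∈ S_k such that for every i ∈ {1, …, k} with x'_i ∈ span(x_1, …, x_k), one has x'_i = x_{σ(i)} or x'_i = −x_{σ(i)}. -/
/- ### Auxiliary lemmas -/

lemma xvec_single (k : ℕ) (i : Fin k) (p : DesignPoint k) :
    xvec k {i} p = ((p i : ℤ) : ℚ) := by simp [xvec]

lemma unit_cast_pm (u : ℤˣ) : ((u : ℤ) : ℚ) = 1 ∨ ((u : ℤ) : ℚ) = -1 := by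
  rcases Int.units_eq_one_or u with h | h <;> simp [h]

/-- A ±1-valued vector lying in the span of the main effects is a signed main effect. -/
lemma pm_span (k : ℕ) (v : DesignPoint k → ℚ)
    (hv : ∀ p, v p = 1 ∨ v p = -1)
    (hmem : v ∈ Submodule.span ℚ (Set.range fun j : Fin k => xvec k {j})) :
    ∃ j : Fin k, v = xvec k {j} ∨ v = -xvec k {j} := by
  classical
  obtain ⟨c, hc⟩ := (Submodule.mem_span_range_iff_exists_fun ℚ).mp hmem
  have hval : ∀ p : DesignPoint k, v p = ∑ j, c j * ((p j : ℤ) : ℚ) := by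
    intro p
    rw [← hc]
    simp [xvec_single]
  -- each coefficient is 0, 1, or -1
  have hcoef : ∀ j, c j = 0 ∨ c j = 1 ∨ c j = -1 := by
    intro j
    set p1 : DesignPoint k := fun _ => 1 with hp1
    set p2 : DesignPoint k := Function.update p1 j (-1) with hp2
    have hdiff : v p1 - v p2 = 2 * c j := by
      rw [hval p1, hval p2, ← Finset.sum_sub_distrib]
      rw [Finset.sum_eq_single j]
      · simp [hp1, hp2]; ring
      · intro l _ hl
        simp [hp2, hp1, Function.update_of_ne hl]
      · simp
    rcases hv p1 with h1 | h1 <;> rcases hv p2 with h2 | h2 <;>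
      rw [h1, h2] at hdiff <;>
      first
        | (left; linarith)
        | (right; left; linarith)
        | (right; right; linarith)
  -- sign-choice point
  set q : DesignPoint k := fun m => if 0 ≤ c m then 1 else -1 with hq
  have hterm : ∀ m, c m * ((q m : ℤ) : ℚ) = |c m| := by
    intro m
    by_cases h : 0 ≤ c m
    · simp [hq, h, abs_of_nonneg h]
    · simp [hq, h, abs_of_neg (lt_of_not_ge h)]
  have hsum : ∑ m, |c m| = v q := by
    rw [hval q]; exact Finset.sum_congr rfl fun m _ => (hterm m).symm
  have hsum1 : ∑ m, |c m| = 1 := by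
    rcases hv q with h | h
    · rw [hsum, h]
    · exfalso
      have : (0:ℚ) ≤ ∑ m, |c m| := Finset.sum_nonneg fun m _ => abs_nonneg _
      rw [hsum, h] at this; linarith
  have hex : ∃ j, c j ≠ 0 := by
    by_contra h
    push_neg at h
    simp [h] at hsum1
  obtain ⟨j, hj⟩ := hex
  have habsj : |c j| = 1 := by
    rcases hcoef j with h | h | h
    · exact absurd h hj
    · simp [h]
    · simp [h]
  have hrest : ∀ m, m ≠ j → c m = 0 := by
    have h0 : ∑ m ∈ Finset.univ.erase j, |c m| = 0 := by
      have := Finset.add_sum_erase Finset.univ (fun m => |c m|) (Finset.mem_univ j)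
      rw [hsum1] at this
      linarith [habsj ▸ this]
    intro m hm
    have := (Finset.sum_eq_zero_iff_of_nonneg (fun m _ => abs_nonneg (c m))).mp h0 m
      (Finset.mem_erase.mpr ⟨hm, Finset.mem_univ m⟩)
    exact abs_eq_zero.mp this
  refine ⟨j, ?_⟩
  have hvp : ∀ p, v p = c j * ((p j : ℤ) : ℚ) := by
    intro p
    rw [hval p, Finset.sum_eq_single j]
    · intro l _ hl; rw [hrest l hl]; ring
    · simp
  rcases hcoef j with h | h | h
  · exact absurd h hj
  · left; funext p; rw [hvp p, h, xvec_single]; ring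
  · right; funext p; rw [hvp p, h]
    show _ = -(xvec k {j} p); rw [xvec_single]; ring

/-- Any injective-on-a-set map of a finite type extends to a permutation. -/
lemma exists_perm_extend {α : Type*} [Fintype α] [DecidableEq α] (g : α → α) (A : Set α)
    (hg : Set.InjOn g A) : ∃ σ : Equiv.Perm α, ∀ i ∈ A, σ i = g i := by
  classical
  let e1 : A ≃ (g '' A : Set α) := Equiv.Set.imageOfInjOn g A hg
  have hcard : Fintype.card (Aᶜ : Set α) = Fintype.card ((g '' A)ᶜ : Set α) := by
    rw [Fintype.card_compl_set, Fintype.card_compl_set, Fintype.card_congr e1]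
  let e2 : (Aᶜ : Set α) ≃ ((g '' A)ᶜ : Set α) := Fintype.equivOfCardEq hcard
  refine ⟨(Equiv.Set.sumCompl A).symm.trans ((Equiv.sumCongr e1 e2).trans
    (Equiv.Set.sumCompl (g '' A))), fun i hi => ?_⟩
  have h1 : (Equiv.Set.sumCompl A).symm i = Sum.inl ⟨i, hi⟩ :=
    Equiv.Set.sumCompl_symm_apply (s := A) (x := ⟨i, hi⟩)
  simp [h1, e1, Equiv.Set.imageOfInjOn]

/-- Distinct main effects are not equal up to sign. -/
lemma xvec_single_not_sign_eq (k : ℕ) {i i' : Fin k} (hne : i ≠ i') (ε : ℚ)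
    (hε : ε = 1 ∨ ε = -1)
    (h : ∀ q : DesignPoint k, xvec k {i} q = ε * xvec k {i'} q) : False := by
  have h1 := h (fun _ => 1)
  simp [xvec_single] at h1
  have h2 := h (Function.update (fun _ => (1:ℤˣ)) i (-1))
  rw [xvec_single, xvec_single, Function.update_self,
    Function.update_of_ne (Ne.symm hne)] at h2
  rcases hε with he | he <;> rw [he] at h1 h2 <;> norm_num at *

/-- For a permutation `π` of `P`, setting `x'_i = π·x_i`, there is a
permutation `σ ∈ S_k` such that whenever `x'_i` lies in `span(x_1, …, x_k)`,
one has `x'_i = ±x_{σ(i)}`. -/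
theorem permuted_main_effects_are_signed_main_effects
    (k : ℕ) (hk : 1 ≤ k) (π : Equiv.Perm (DesignPoint k)) :
    ∃ σ : Equiv.Perm (Fin k), ∀ i : Fin k,
      permVec k π (xvec k {i}) ∈
        Submodule.span ℚ (Set.range fun j : Fin k => xvec k {j}) →
      permVec k π (xvec k {i}) = xvec k {σ i} ∨
        permVec k π (xvec k {i}) = -xvec k {σ i} := by
  classical
  set A : Set (Fin k) :=
    {i | permVec k π (xvec k {i}) ∈
      Submodule.span ℚ (Set.range fun j : Fin k => xvec k {j})} with hA
  have hpm : ∀ (i : Fin k) (p : DesignPoint k),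
      permVec k π (xvec k {i}) p = 1 ∨ permVec k π (xvec k {i}) p = -1 := by
    intro i p
    show xvec k {i} (π⁻¹ p) = 1 ∨ xvec k {i} (π⁻¹ p) = -1
    rw [xvec_single]
    exact unit_cast_pm _
  have key : ∀ i : Fin k, ∃ j : Fin k, i ∈ A →
      (permVec k π (xvec k {i}) = xvec k {j} ∨
        permVec k π (xvec k {i}) = -xvec k {j}) := by
    intro i
    by_cases h : i ∈ A
    · obtain ⟨j, hj⟩ := pm_span k (permVec k π (xvec k {i})) (hpm i) h
      exact ⟨j, fun _ => hj⟩
    · exact ⟨i, fun h' => absurd h' h⟩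
  choose g hg using key
  -- pointwise equality transfer through π
  have transfer : ∀ (i i' : Fin k),
      permVec k π (xvec k {i}) = permVec k π (xvec k {i'}) →
      ∀ q, xvec k {i} q = xvec k {i'} q := by
    intro i i' h q
    have := congrFun h (π q)
    simpa [permVec] using this
  have transferNeg : ∀ (i i' : Fin k),
      permVec k π (xvec k {i}) = -permVec k π (xvec k {i'}) →
      ∀ q, xvec k {i} q = -xvec k {i'} q := by
    intro i i' h q
    have := congrFun h (π q)
    simpa [permVec] using this
  have hinj : Set.InjOn g A := by
    intro i hi i' hi' heq
    by_contra hne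
    rcases hg i hi with h1 | h1 <;> rcases hg i' hi' with h2 | h2
    · exact xvec_single_not_sign_eq k hne 1 (Or.inl rfl)
        (fun q => by rw [one_mul]; exact transfer i i' (by rw [h1, heq, ← h2]) q)
    · refine xvec_single_not_sign_eq k hne (-1) (Or.inr rfl) (fun q => ?_)
      have := transferNeg i i' (by rw [h1, heq, h2]; first | simp | rfl) q
      rw [this]; ring
    · refine xvec_single_not_sign_eq k hne (-1) (Or.inr rfl) (fun q => ?_)
      have := transferNeg i i' (by rw [h1, heq, h2]) q
      rw [this]; ring
    · exact xvec_single_not_sign_eq k hne 1 (Or.inl rfl)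
        (fun q => by
          rw [one_mul]
          exact transfer i i' (by rw [h1, heq, ← h2]) q)
  obtain ⟨σ, hσ⟩ := exists_perm_extend g A hinj
  refine ⟨σ, fun i hi => ?_⟩
  rw [hσ i hi]
  exact hg i hi
end

section
/- Let t = 1. Then |G^LP| ≤ 2^k · k!. -/
namespace StrengthOneAux

open Finset

/-- flip the `j`-th coordinate -/
def flip (k : ℕ) (j : Fin k) : Equiv.Perm (DesignPoint k) :=
  Equiv.piCongrRight fun i => if i = j then Equiv.neg ℤˣ else Equiv.refl ℤˣ

lemma flip_apply {k : ℕ} (j : Fin k) (q : DesignPoint k) (i : Fin k) :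
    flip k j q i = if i = j then -q i else q i := by
  simp only [flip, Equiv.piCongrRight_apply, Pi.map_apply]
  by_cases h : i = j <;> simp [h]

lemma card_design (k : ℕ) : Fintype.card (DesignPoint k) = 2 ^ k := by
  simp [Fintype.card_fun, Fintype.card_units_int]

lemma sum_coord {k : ℕ} (j : Fin k) :
    ∑ q : DesignPoint k, ((q j : ℤ) : ℚ) = 0 := by
  have h := Equiv.sum_comp (flip k j) (fun q : DesignPoint k => ((q j : ℤ) : ℚ))
  simp only [flip_apply, if_pos rfl] at h
  push_cast at h
  rw [Finset.sum_neg_distrib] at h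
  linarith

lemma sum_coord_mul {k : ℕ} (m j : Fin k) :
    ∑ q : DesignPoint k, ((q m : ℤ) : ℚ) * ((q j : ℤ) : ℚ)
      = if m = j then (2 ^ k : ℚ) else 0 := by
  by_cases h : m = j
  · subst h
    rw [if_pos rfl]
    have : ∀ q : DesignPoint k, ((q m : ℤ) : ℚ) * ((q m : ℤ) : ℚ) = 1 := by
      intro q
      rcases Int.units_eq_one_or (q m) with h' | h' <;> rw [h'] <;> norm_num
    rw [Finset.sum_congr rfl fun q _ => this q]
    simp [card_design]
  · rw [if_neg h]
    have heq := Equiv.sum_comp (flip k j)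
      (fun q : DesignPoint k => ((q m : ℤ) : ℚ) * ((q j : ℤ) : ℚ))
    simp only [flip_apply, if_pos rfl, if_neg h] at heq
    push_cast at heq
    have : ∀ q : DesignPoint k,
        ((q m : ℤ) : ℚ) * -((q j : ℤ) : ℚ) = -(((q m : ℤ) : ℚ) * ((q j : ℤ) : ℚ)) := by
      intro q; ring
    rw [Finset.sum_congr rfl fun q _ => this q, Finset.sum_neg_distrib] at heq
    linarith

lemma sum_perm_coord {k : ℕ} (π : Equiv.Perm (DesignPoint k)) (i : Fin k) :
    ∑ q : DesignPoint k, ((π q i : ℤ) : ℚ) = 0 := by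
  rw [Equiv.sum_comp π (fun r : DesignPoint k => ((r i : ℤ) : ℚ))]
  exact sum_coord i

/-- Key perturbation lemma: rows of a feasible permutation are orthogonal to the
direction space of the polytope. -/
lemma orth {k N : ℕ} (hN : 1 ≤ N) {π : Equiv.Perm (DesignPoint k)}
    (hπ : π ∈ GLP k N 1) (i : Fin k) (w : DesignPoint k → ℚ)
    (h0 : ∑ q, w q = 0) (h1 : ∀ j, ∑ q, ((q j : ℤ) : ℚ) * w q = 0) :
    ∑ q, ((π q i : ℤ) : ℚ) * w q = 0 := by
  set M : ℚ := ∑ q, |w q| with hM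
  have hM0 : 0 ≤ M := Finset.sum_nonneg fun q _ => abs_nonneg _
  have hMw : ∀ q, |w q| ≤ M := by
    intro q
    exact Finset.single_le_sum (fun r _ => abs_nonneg (w r)) (Finset.mem_univ q)
  have h2k : (0:ℚ) < 2 ^ k := by positivity
  have hNQ : (0:ℚ) < N := by exact_mod_cast hN
  set c : ℚ := N / 2 ^ k with hc
  have hc0 : 0 < c := by positivity
  set ε : ℚ := c / (M + 1) with hε
  have hε0 : 0 < ε := by positivity
  set f : DesignPoint k → ℚ := fun q => c + ε * w q with hf
  have hfeas : f ∈ feas k N 1 := by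
    refine ⟨?_, ?_, ?_⟩
    · intro q
      have hw : -M ≤ w q := (abs_le.mp (hMw q)).1
      have : c + ε * w q = c * ((M + 1) + w q) / (M + 1) := by
        rw [hε]; field_simp
      rw [hf]
      simp only []
      rw [this]
      apply div_nonneg
      · apply mul_nonneg hc0.le; linarith
      · linarith
    · rw [hf]
      simp only []
      rw [Finset.sum_add_distrib, ← Finset.mul_sum, h0, mul_zero, add_zero,
        Finset.sum_const, Finset.card_univ, card_design, nsmul_eq_mul, hc]
      push_cast
      field_simp
    · intro S hne hcard
      have hcard1 : S.card = 1 :=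
        le_antisymm hcard (Finset.card_pos.mpr (Finset.nonempty_iff_ne_empty.mpr hne))
      obtain ⟨j, rfl⟩ := Finset.card_eq_one.mp hcard1
      have hx : ∀ p : DesignPoint k, xvec k {j} p = ((p j : ℤ) : ℚ) := by
        intro p; simp [xvec]
      simp only [hx, hf]
      have : ∀ q : DesignPoint k,
          ((q j : ℤ) : ℚ) * (c + ε * w q)
            = c * ((q j : ℤ) : ℚ) + ε * (((q j : ℤ) : ℚ) * w q) := by
        intro q; ring
      rw [Finset.sum_congr rfl fun q _ => this q, Finset.sum_add_distrib,
        ← Finset.mul_sum, ← Finset.mul_sum, sum_coord j, h1 j]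
      ring
  have hmem := hπ f hfeas
  obtain ⟨-, -, h3⟩ := hmem
  have hSi := h3 {i} (by simp) (by simp)
  have hx : ∀ p : DesignPoint k, xvec k {i} p = ((p i : ℤ) : ℚ) := by
    intro p; simp [xvec]
  simp only [hx, permVec] at hSi
  rw [← Equiv.sum_comp π
    (fun p : DesignPoint k => ((p i : ℤ) : ℚ) * f (π⁻¹ p))] at hSi
  simp only [Equiv.Perm.inv_def, Equiv.symm_apply_apply] at hSi
  have hexp : ∀ q : DesignPoint k,
      ((π q i : ℤ) : ℚ) * f q
        = c * ((π q i : ℤ) : ℚ) + ε * (((π q i : ℤ) : ℚ) * w q) := by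
    intro q; rw [hf]; ring
  rw [Finset.sum_congr rfl fun q _ => hexp q, Finset.sum_add_distrib,
    ← Finset.mul_sum, ← Finset.mul_sum, sum_perm_coord π i] at hSi
  have : ε * ∑ q, ((π q i : ℤ) : ℚ) * w q = 0 := by linarith
  exact (mul_eq_zero.mp this).resolve_left (ne_of_gt hε0)

/-- Each row of `π` is a signed coordinate function. -/
lemma exists_signed {k N : ℕ} (hN : 1 ≤ N) {π : Equiv.Perm (DesignPoint k)}
    (hπ : π ∈ GLP k N 1) (i : Fin k) :
    ∃ s : ℤˣ, ∃ j : Fin k, ∀ p : DesignPoint k, π p i = s * p j := by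
  classical
  set a : Fin k → ℚ := fun j => (∑ q : DesignPoint k, ((π q i : ℤ) : ℚ) * ((q j : ℤ) : ℚ)) / 2 ^ k
    with ha
  have h2k : (0:ℚ) < 2 ^ k := by positivity
  set w : DesignPoint k → ℚ :=
    fun q => ((π q i : ℤ) : ℚ) - ∑ j, a j * ((q j : ℤ) : ℚ) with hw
  have hw0 : ∑ q, w q = 0 := by
    rw [hw]
    simp only []
    rw [Finset.sum_sub_distrib, sum_perm_coord π i, Finset.sum_comm]
    rw [Finset.sum_congr rfl fun j _ => by
      rw [← Finset.mul_sum, sum_coord j, mul_zero]]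
    simp
  have hw1 : ∀ m, ∑ q, ((q m : ℤ) : ℚ) * w q = 0 := by
    intro m
    rw [hw]
    simp only []
    have : ∀ q : DesignPoint k,
        ((q m : ℤ) : ℚ) * (((π q i : ℤ) : ℚ) - ∑ j, a j * ((q j : ℤ) : ℚ))
          = ((π q i : ℤ) : ℚ) * ((q m : ℤ) : ℚ)
            - ∑ j, a j * (((q m : ℤ) : ℚ) * ((q j : ℤ) : ℚ)) := by
      intro q
      rw [mul_sub, Finset.mul_sum, mul_comm]
      congr 1
      exact Finset.sum_congr rfl fun j _ => by ring
    rw [Finset.sum_congr rfl fun q _ => this q, Finset.sum_sub_distrib, Finset.sum_comm]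
    rw [Finset.sum_congr rfl (g := fun j => if m = j then a j * (2^k:ℚ) else 0)
      fun j _ => by rw [← Finset.mul_sum, sum_coord_mul m j, mul_ite, mul_zero]]
    rw [Finset.sum_ite_eq (Finset.univ) m (fun j => a j * (2^k:ℚ))]
    simp only [Finset.mem_univ, if_pos]
    rw [ha]
    field_simp
    ring
  have horth := orth hN hπ i w hw0 hw1
  have horth2 : ∑ q, (∑ j, a j * ((q j : ℤ) : ℚ)) * w q = 0 := by
    rw [Finset.sum_congr rfl fun q _ => Finset.sum_mul _ _ (w q), Finset.sum_comm]
    apply Finset.sum_eq_zero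
    intro j _
    rw [Finset.sum_congr rfl fun q _ => mul_assoc (a j) _ (w q), ← Finset.mul_sum,
      hw1 j, mul_zero]
  have hsq : ∑ q, w q * w q = 0 := by
    have : ∀ q : DesignPoint k, w q * w q
        = ((π q i : ℤ) : ℚ) * w q - (∑ j, a j * ((q j : ℤ) : ℚ)) * w q := by
      intro q
      rw [hw]; ring
    rw [Finset.sum_congr rfl fun q _ => this q, Finset.sum_sub_distrib, horth, horth2,
      sub_zero]
  have hwz : ∀ q, w q = 0 := by
    intro q
    have := (Finset.sum_eq_zero_iff_of_nonneg
      (fun r _ => mul_self_nonneg (w r))).mp hsq q (Finset.mem_univ q)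
    exact (mul_self_eq_zero).mp this
  have hrep : ∀ p : DesignPoint k, ((π p i : ℤ) : ℚ) = ∑ j, a j * ((p j : ℤ) : ℚ) := by
    intro p
    have := hwz p
    rw [hw] at this
    simp only [] at this
    linarith
  -- evaluate at the sign pattern of `a`
  set u : DesignPoint k := fun j => if 0 ≤ a j then 1 else -1 with hu
  have huval : ∀ j, a j * ((u j : ℤ) : ℚ) = |a j| := by
    intro j
    rw [hu]
    by_cases h : 0 ≤ a j
    · simp [h, abs_of_nonneg h]
    · push_neg at h
      simp [if_neg (not_le.mpr h), abs_of_neg h]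
  have hpm : ∀ (p : DesignPoint k) (m : Fin k),
      ((p m : ℤ) : ℚ) = 1 ∨ ((p m : ℤ) : ℚ) = -1 := by
    intro p m
    rcases Int.units_eq_one_or (p m) with h | h <;> [left; right] <;> rw [h] <;> norm_num
  have habs : ∑ j, |a j| = 1 := by
    have h := hrep u
    rw [Finset.sum_congr rfl fun j _ => huval j] at h
    rcases hpm (π u) i with h' | h'
    · linarith
    · exfalso
      have : (0:ℚ) ≤ ∑ j, |a j| := Finset.sum_nonneg fun j _ => abs_nonneg _
      linarith
  have hex : ∃ j, a j ≠ 0 := by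
    by_contra hcon
    push_neg at hcon
    rw [Finset.sum_congr rfl fun j _ => by rw [hcon j, abs_zero]] at habs
    simp at habs
  obtain ⟨j₀, hj₀⟩ := hex
  -- flip coordinate j₀ of u
  set u' : DesignPoint k := Function.update u j₀ (-(u j₀)) with hu'
  have hu'val : ∀ j, a j * ((u' j : ℤ) : ℚ)
      = if j = j₀ then -|a j| else |a j| := by
    intro j
    by_cases h : j = j₀
    · subst h
      rw [hu', if_pos rfl]
      rw [Function.update_self]
      push_cast
      rw [mul_neg, huval]
    · rw [hu', if_neg h, Function.update_of_ne h, huval]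
  have hval' : ((π u' i : ℤ) : ℚ) = 1 - 2 * |a j₀| := by
    have h := hrep u'
    rw [Finset.sum_congr rfl fun j _ => hu'val j] at h
    have hsplit : ∀ j : Fin k, (if j = j₀ then -|a j| else |a j|)
        = |a j| - (if j = j₀ then 2 * |a j| else 0) := by
      intro j; split <;> ring
    rw [Finset.sum_congr rfl fun j _ => hsplit j, Finset.sum_sub_distrib, habs,
      Finset.sum_ite_eq' Finset.univ j₀ (fun j => 2 * |a j|)] at h
    simpa using h
  have habs1 : |a j₀| = 1 := by
    rcases hpm (π u') i with h' | h'
    · exfalso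
      rw [h'] at hval'
      have : |a j₀| = 0 := by linarith
      exact hj₀ (abs_eq_zero.mp this)
    · rw [h'] at hval'
      linarith
  have hzero : ∀ j, j ≠ j₀ → a j = 0 := by
    intro j hj
    have hrest : ∑ m ∈ Finset.univ.erase j₀, |a m| = 0 := by
      have h2 : |a j₀| + ∑ m ∈ Finset.univ.erase j₀, |a m| = ∑ m, |a m| :=
        Finset.add_sum_erase Finset.univ (fun m => |a m|) (Finset.mem_univ j₀)
      rw [habs, habs1] at h2
      linarith
    have := (Finset.sum_eq_zero_iff_of_nonneg
      (fun m _ => abs_nonneg (a m))).mp hrest j (Finset.mem_erase.mpr ⟨hj, Finset.mem_univ j⟩)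
    exact abs_eq_zero.mp this
  have hrep' : ∀ p : DesignPoint k, ((π p i : ℤ) : ℚ) = a j₀ * ((p j₀ : ℤ) : ℚ) := by
    intro p
    rw [hrep p, Finset.sum_eq_single j₀ (fun j _ hj => by rw [hzero j hj, zero_mul])
      (fun hj => absurd (Finset.mem_univ j₀) hj)]
  rcases abs_eq (by norm_num : (0:ℚ) ≤ 1) |>.mp habs1 with ha1 | ha1
  · refine ⟨1, j₀, fun p => ?_⟩
    have hthis := hrep' p
    rw [ha1, one_mul] at hthis
    rw [one_mul]
    exact Units.ext (by exact_mod_cast hthis)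
  · refine ⟨-1, j₀, fun p => ?_⟩
    have hthis := hrep' p
    rw [ha1] at hthis
    have hq : ((π p i : ℤ) : ℚ) = -((p j₀ : ℤ) : ℚ) := by linarith
    rw [neg_one_mul]
    refine Units.ext ?_
    rw [Units.val_neg]
    exact_mod_cast hq

lemma exists_pair {k N : ℕ} (hN : 1 ≤ N) {π : Equiv.Perm (DesignPoint k)}
    (hπ : π ∈ GLP k N 1) :
    ∃ sp : (Fin k → ℤˣ) × Equiv.Perm (Fin k),
      ∀ p i, π p i = sp.1 i * p (sp.2 i) := by
  classical
  choose s τ h using fun i => exists_signed hN hπ i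
  have hinj : Function.Injective τ := by
    intro i₁ i₂ hτ
    by_contra hne
    set q : DesignPoint k := fun i => if i = i₂ then -(s i₂) else s i₁ with hq
    obtain ⟨p, hp⟩ := π.surjective q
    have h1 : s i₁ * p (τ i₁) = s i₁ := by
      rw [← h i₁ p, hp, hq]
      simp [hne]
    have h2 : s i₂ * p (τ i₂) = -(s i₂) := by
      rw [← h i₂ p, hp, hq]
      simp
    have hp1 : p (τ i₁) = 1 :=
      mul_left_cancel (show s i₁ * p (τ i₁) = s i₁ * 1 by rw [mul_one, h1])
    have hp2 : p (τ i₂) = -1 :=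
      mul_left_cancel (show s i₂ * p (τ i₂) = s i₂ * (-1) by rw [h2]; simp)
    rw [hτ, hp2] at hp1
    exact absurd hp1 (by decide)
  refine ⟨(s, Equiv.ofBijective τ (Finite.injective_iff_bijective.mp hinj)), fun p i => ?_⟩
  exact h i p

end StrengthOneAux

/-- For `t = 1`, `|G^LP| ≤ 2^k · k!`. -/
theorem strength_one_card_GLP_le
    (k N : ℕ) (hk : 1 ≤ k) (hN : 1 ≤ N) :
    (GLP k N 1).ncard ≤ 2 ^ k * Nat.factorial k := by
  classical
  have key : ∀ π : ↥(GLP k N 1), ∃ sp : (Fin k → ℤˣ) × Equiv.Perm (Fin k),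
      ∀ p i, (π : Equiv.Perm (DesignPoint k)) p i = sp.1 i * p (sp.2 i) :=
    fun π => StrengthOneAux.exists_pair hN π.2
  choose Φ hΦ using key
  have hΦinj : Function.Injective Φ := by
    intro π₁ π₂ hEq
    apply Subtype.ext
    apply Equiv.ext
    intro p
    funext i
    rw [hΦ π₁ p i, hΦ π₂ p i, hEq]
  have hle := Nat.card_le_card_of_injective Φ hΦinj
  rw [Nat.card_coe_set_eq] at hle
  refine le_trans hle ?_
  rw [Nat.card_eq_fintype_card, Fintype.card_prod, Fintype.card_fun,
    Fintype.card_units_int, Fintype.card_perm, Fintype.card_fin]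
end

section
/- Let t = 1. Then G^LP is isomorphic to the wreath product S_2 ≀ S_k; in fact G^LP is exactly the group of signed coordinate permutations of P (maps p ↦ (ε_1 p_{σ^{−1}(1)}, …, ε_k p_{σ^{−1}(k)}) for ε ∈ {−1,1}^k and σ ∈ S_k), and |G^LP| = 2^k · k!. -/
/-- The signed coordinate permutation of `P = {-1,1}^k` given by a sign vector
`ε ∈ {-1,1}^k` and `σ ∈ S_k`: `p ↦ (ε 1 * p (σ⁻¹ 1), …, ε k * p (σ⁻¹ k))`. -/
def signedPerm (k : ℕ) (ε : Fin k → ℤˣ) (σ : Equiv.Perm (Fin k)) :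
    Equiv.Perm (DesignPoint k) :=
  (Equiv.arrowCongr σ (Equiv.refl ℤˣ)).trans
    (Equiv.piCongrRight fun i => Equiv.mulLeft (ε i))

/-- The automorphism of `S_2^k` (with `S_2` realized as `Equiv.Perm (Fin 2)`)
permuting the `k` coordinates by `σ`. -/
def wreathAut (k : ℕ) (σ : Equiv.Perm (Fin k)) :
    (Fin k → Equiv.Perm (Fin 2)) ≃* (Fin k → Equiv.Perm (Fin 2)) :=
  { Equiv.arrowCongr σ (Equiv.refl (Equiv.Perm (Fin 2))) with
    map_mul' := fun _ _ => rfl }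

/-- The action of `S_k` on `S_2^k` permuting the `k` copies of `S_2`. -/
def wreathHom (k : ℕ) :
    Equiv.Perm (Fin k) →* MulAut (Fin k → Equiv.Perm (Fin 2)) where
  toFun := wreathAut k
  map_one' := MulEquiv.ext fun _ => rfl
  map_mul' := fun _ _ => MulEquiv.ext fun _ => rfl

/-- The wreath product `S_2 ≀ S_k`, i.e. the semidirect product
`S_2^k ⋊ S_k` with `S_k` permuting the `k` copies of `S_2`. -/
abbrev WreathS2Sk (k : ℕ) :=
  (Fin k → Equiv.Perm (Fin 2)) ⋊[wreathHom k] Equiv.Perm (Fin k)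

lemma singleton_of_card {k : ℕ} (S : Finset (Fin k)) (h1 : S ≠ ∅) (h2 : S.card ≤ 1) :
    ∃ i, S = {i} :=
  Finset.card_eq_one.mp (le_antisymm h2 (Finset.card_pos.mpr (Finset.nonempty_of_ne_empty h1)))

lemma signedPerm_apply (k : ℕ) (ε : Fin k → ℤˣ) (σ : Equiv.Perm (Fin k))
    (p : DesignPoint k) (i : Fin k) : signedPerm k ε σ p i = ε i * p (σ⁻¹ i) := rfl


lemma signed_mem (k N : ℕ) (ε : Fin k → ℤˣ) (σ : Equiv.Perm (Fin k)) :
    signedPerm k ε σ ∈ GLP k N 1 := by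
  intro f hf
  obtain ⟨hpos, hsum, hcon⟩ := hf
  set π := signedPerm k ε σ with hπ
  refine ⟨fun p => hpos _, ?_, ?_⟩
  · exact (Equiv.sum_comp π⁻¹ f).trans hsum
  · intro S hS1 hS2
    obtain ⟨i, rfl⟩ := singleton_of_card S hS1 hS2
    have h0 := hcon {σ⁻¹ i} (by simp) (by simp)
    have := Equiv.sum_comp π (fun p => xvec k {i} p * permVec k π f p)
    rw [← this]
    simp only [xvec, Finset.prod_singleton, permVec]
    have key : ∀ q : DesignPoint k,
        ((π q i : ℤ) : ℚ) * f (π⁻¹ (π q)) = ((ε i : ℤ):ℚ) * (((q (σ⁻¹ i) : ℤ):ℚ) * f q) := by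
      intro q
      rw [show π⁻¹ (π q) = q from π.symm_apply_apply q]
      have : π q i = ε i * q (σ⁻¹ i) := rfl
      rw [this]
      push_cast
      ring
    rw [Finset.sum_congr rfl (fun q _ => key q), ← Finset.mul_sum]
    simp only [xvec, Finset.prod_singleton] at h0
    rw [h0, mul_zero]

/-- If `π ∈ G^LP` and the points of `A` sum to zero coordinatewise, so do their images. -/
lemma zero_sum_image {k N : ℕ} (hN : 1 ≤ N) {π : Equiv.Perm (DesignPoint k)}
    (hπ : π ∈ GLP k N 1) (A : Finset (DesignPoint k)) (hA : A.Nonempty)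
    (hz : ∀ m, ∑ p ∈ A, ((p m : ℤ) : ℚ) = 0) (m : Fin k) :
    ∑ p ∈ A, ((π p m : ℤ) : ℚ) = 0 := by
  have hcard : (0:ℚ) < (A.card : ℚ) := by
    exact_mod_cast Finset.card_pos.mpr hA
  set c : ℚ := (N : ℚ) / (A.card : ℚ) with hc
  have hcpos : 0 < c := by
    apply div_pos _ hcard
    exact_mod_cast hN
  have hfeas : (fun p : DesignPoint k => if p ∈ A then c else 0) ∈ feas k N 1 := by
    refine ⟨fun p => ?_, ?_, ?_⟩
    · dsimp only; split <;> [exact le_of_lt hcpos; exact le_refl 0]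
    · beta_reduce
      rw [Finset.sum_ite_mem, Finset.univ_inter, Finset.sum_const, nsmul_eq_mul, hc]
      field_simp
    · intro S hS1 hS2
      obtain ⟨i, rfl⟩ := singleton_of_card S hS1 hS2
      simp only [xvec, Finset.prod_singleton, mul_ite, mul_zero]
      rw [Finset.sum_ite_mem, Finset.univ_inter, ← Finset.sum_mul, hz i, zero_mul]
  have h2 := (hπ _ hfeas).2.2 {m} (by simp) (by simp)
  simp only [xvec, Finset.prod_singleton, permVec] at h2
  rw [← Equiv.sum_comp π
    (fun p => ((p m : ℤ):ℚ) * (if π⁻¹ p ∈ A then c else 0))] at h2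
  simp only [show ∀ x, π⁻¹ (π x) = x from π.symm_apply_apply, mul_ite, mul_zero] at h2
  rw [Finset.sum_ite_mem, Finset.univ_inter, ← Finset.sum_mul] at h2
  rcases mul_eq_zero.mp h2 with h | h
  · exact h
  · exact absurd h (ne_of_gt hcpos)

/-- Summing any coordinate over all of `P` gives zero. -/
lemma univ_zero {k : ℕ} (m : Fin k) : ∑ p : DesignPoint k, ((p m : ℤ) : ℚ) = 0 := by
  have := Equiv.sum_comp (signedPerm k (fun _ => -1) 1) (fun p : DesignPoint k => ((p m : ℤ):ℚ))
  have hval : ∀ p : DesignPoint k,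
      (((signedPerm k (fun _ => -1) 1 p) m : ℤ) : ℚ) = -((p m : ℤ):ℚ) := by
    intro p
    have : signedPerm k (fun _ => -1) 1 p m = -1 * p ((1 : Equiv.Perm (Fin k))⁻¹ m) := rfl
    rw [this]
    push_cast
    ring_nf
    norm_num
  rw [Finset.sum_congr rfl (fun p _ => hval p)] at this
  rw [Finset.sum_neg_distrib] at this
  linarith

/-- If a sign-flip `ε` flips coordinate `m` but preserves the product over `S`,
then summing coordinate `m` over `A_S = {p : ∏_{j∈S} p_j = 1}` gives `0`. -/
lemma flip_sum {k : ℕ} (S : Finset (Fin k)) (ε : Fin k → ℤˣ) (m : Fin k)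
    (hm : ε m = -1) (hS : ∏ j ∈ S, ε j = 1) :
    ∑ p ∈ Finset.univ.filter (fun p : DesignPoint k => ∏ j ∈ S, p j = 1),
      ((p m : ℤ) : ℚ) = 0 := by
  set A := Finset.univ.filter (fun p : DesignPoint k => ∏ j ∈ S, p j = 1) with hA
  set e := signedPerm k ε 1 with he
  have hmem : ∀ p : DesignPoint k, p ∈ A ↔ e p ∈ A := by
    intro p
    simp only [hA, Finset.mem_filter, Finset.mem_univ, true_and]
    have : ∀ j, e p j = ε j * p j := fun j => rfl
    rw [Finset.prod_congr rfl (fun j _ => this j), Finset.prod_mul_distrib, hS, one_mul]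
  have key : ∑ p ∈ A, ((p m : ℤ) : ℚ) = ∑ p ∈ A, (-((p m : ℤ) : ℚ)) := by
    refine Finset.sum_equiv e (fun p => hmem p) ?_
    intro p _
    have : e p m = ε m * p m := rfl
    rw [this, hm]
    push_cast
    ring
  rw [Finset.sum_neg_distrib] at key
  linarith

/-- For `|S| ≥ 2`, each coordinate sums to zero over `A_S`. -/
lemma AS_zero {k : ℕ} (S : Finset (Fin k)) (hS : 2 ≤ S.card) (m : Fin k) :
    ∑ p ∈ Finset.univ.filter (fun p : DesignPoint k => ∏ j ∈ S, p j = 1),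
      ((p m : ℤ) : ℚ) = 0 := by
  by_cases hmS : m ∈ S
  · have herase : (S.erase m).Nonempty := by
      rw [← Finset.card_pos, Finset.card_erase_of_mem hmS]
      omega
    obtain ⟨j₀, hj₀⟩ := herase
    have hj₀S : j₀ ∈ S := Finset.mem_of_mem_erase hj₀
    have hj₀m : j₀ ≠ m := Finset.ne_of_mem_erase hj₀
    refine flip_sum S (fun i => if i = m then -1 else if i = j₀ then -1 else 1) m (by simp) ?_
    rw [← Finset.prod_erase_mul S _ hmS, if_pos rfl,
      ← Finset.prod_erase_mul (S.erase m) _ hj₀, if_neg hj₀m, if_pos rfl]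
    rw [Finset.prod_eq_one, one_mul]
    · norm_num
    · intro i hi
      have hi1 : i ≠ j₀ := Finset.ne_of_mem_erase hi
      have hi2 : i ≠ m := Finset.ne_of_mem_erase (Finset.mem_of_mem_erase hi)
      rw [if_neg hi2, if_neg hi1]
  · refine flip_sum S (fun i => if i = m then -1 else 1) m (by simp) ?_
    apply Finset.prod_eq_one
    intro i hi
    rw [if_neg]
    exact fun h => hmS (h ▸ hi)

lemma orth {k : ℕ} (p q : DesignPoint k) :
    ∏ j, (((p j : ℤ):ℚ) * ((q j : ℤ):ℚ) + 1) = if p = q then (2:ℚ)^k else 0 := by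
  by_cases h : p = q
  · subst h
    rw [if_pos rfl]
    have : ∀ j, ((p j : ℤ):ℚ) * ((p j : ℤ):ℚ) + 1 = 2 := by
      intro j
      rcases Int.units_eq_one_or (p j) with h | h <;> rw [h] <;> norm_num
    rw [Finset.prod_congr rfl (fun j _ => this j), Finset.prod_const, Finset.card_univ,
      Fintype.card_fin]
  · rw [if_neg h]
    obtain ⟨j, hj⟩ := Function.ne_iff.mp h
    refine Finset.prod_eq_zero (Finset.mem_univ j) ?_
    rcases Int.units_eq_one_or (p j) with h1 | h1 <;> rcases Int.units_eq_one_or (q j) with h2 | h2 <;>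
      first
        | (exact absurd (h1.trans h2.symm) hj)
        | (rw [h1, h2]; norm_num)

lemma extract {k : ℕ} (z : DesignPoint k → ℚ)
    (hz : ∀ p, z p = 1 ∨ z p = -1)
    (h0 : ∑ p, z p = 0)
    (h2 : ∀ S : Finset (Fin k), 2 ≤ S.card →
      ∑ p, (∏ j ∈ S, ((p j : ℤ):ℚ)) * z p = 0) :
    ∃ (e : ℤˣ) (j : Fin k), ∀ p, z p = ((e : ℤ):ℚ) * ((p j : ℤ):ℚ) := by
  classical
  set b : Fin k → ℚ := fun j => ∑ p, ((p j : ℤ):ℚ) * z p with hb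
  -- the inversion formula
  have key : ∀ q : DesignPoint k, (2:ℚ)^k * z q = ∑ j, b j * ((q j : ℤ):ℚ) := by
    intro q
    have step1 : (2:ℚ)^k * z q = ∑ p, (if p = q then (2:ℚ)^k else 0) * z p := by
      simp only [ite_mul, zero_mul]
      rw [Finset.sum_ite_eq' Finset.univ q (fun p => (2:ℚ)^k * z p), if_pos (Finset.mem_univ q)]
    have step2 : ∀ p : DesignPoint k, (if p = q then (2:ℚ)^k else 0)
        = ∑ S ∈ (Finset.univ : Finset (Fin k)).powerset,
            (∏ j ∈ S, ((p j : ℤ):ℚ)) * (∏ j ∈ S, ((q j : ℤ):ℚ)) := by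
      intro p
      rw [← orth p q, Finset.prod_add]
      refine Finset.sum_congr rfl (fun S _ => ?_)
      rw [Finset.prod_const_one, mul_one, Finset.prod_mul_distrib]
    have step3 : (2:ℚ)^k * z q = ∑ S ∈ (Finset.univ : Finset (Fin k)).powerset,
        (∑ p, (∏ j ∈ S, ((p j : ℤ):ℚ)) * z p) * (∏ j ∈ S, ((q j : ℤ):ℚ)) := by
      rw [step1, Finset.sum_congr rfl (fun p _ => by rw [step2 p, Finset.sum_mul]),
        Finset.sum_comm]
      refine Finset.sum_congr rfl (fun S _ => ?_)
      rw [Finset.sum_mul]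
      refine Finset.sum_congr rfl (fun p _ => ?_)
      ring
    -- only singletons survive
    set T := Finset.univ.image (fun j : Fin k => ({j} : Finset (Fin k))) with hT
    have hsub : T ⊆ (Finset.univ : Finset (Fin k)).powerset :=
      fun S _ => Finset.mem_powerset.mpr (Finset.subset_univ S)
    have hvan : ∀ S ∈ (Finset.univ : Finset (Fin k)).powerset, S ∉ T →
        (∑ p, (∏ j ∈ S, ((p j : ℤ):ℚ)) * z p) * (∏ j ∈ S, ((q j : ℤ):ℚ)) = 0 := by
      intro S _ hST
      have hcard : S.card ≠ 1 := by
        intro hc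
        obtain ⟨j, rfl⟩ := Finset.card_eq_one.mp hc
        exact hST (Finset.mem_image.mpr ⟨j, Finset.mem_univ j, rfl⟩)
      rcases Nat.lt_or_ge S.card 2 with hlt | hge
      · have : S.card = 0 := by omega
        rw [Finset.card_eq_zero.mp this]
        simp only [Finset.prod_empty, one_mul, mul_one]
        exact h0
      · rw [h2 S hge, zero_mul]
    rw [step3, ← Finset.sum_subset hsub hvan, hT,
      Finset.sum_image (fun a _ b _ h => Finset.singleton_injective h)]
    exact Finset.sum_congr rfl (fun j _ => by simp only [Finset.prod_singleton, hb])
  have hpow : (0:ℚ) < (2:ℚ)^k := by positivity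
  -- possible values of b j
  have bcases : ∀ j, b j = 0 ∨ b j = (2:ℚ)^k ∨ b j = -((2:ℚ)^k) := by
    intro j
    set q1 : DesignPoint k := fun _ => 1 with hq1
    set q2 : DesignPoint k := fun i => if i = j then -1 else 1 with hq2
    have k1 := key q1
    have k2 := key q2
    have e1 : ∑ i, b i * ((q1 i : ℤ):ℚ) = ∑ i, b i := by
      refine Finset.sum_congr rfl (fun i _ => ?_)
      rw [hq1]; norm_num
    have e2 : ∑ i, b i * ((q2 i : ℤ):ℚ) = (∑ i, b i) - 2 * b j := by
      have : ∀ i, b i * ((q2 i : ℤ):ℚ) = b i - (if i = j then 2 * b i else 0) := by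
        intro i
        simp only [hq2]
        by_cases h : i = j
        · rw [if_pos h, if_pos h]; push_cast; ring
        · rw [if_neg h, if_neg h]; push_cast; ring
      rw [Finset.sum_congr rfl (fun i _ => this i), Finset.sum_sub_distrib,
        Finset.sum_ite_eq' Finset.univ j (fun i => 2 * b i), if_pos (Finset.mem_univ j)]
    rw [e1] at k1
    rw [e2] at k2
    have hd : (2:ℚ)^k * (z q1 - z q2) = 2 * b j := by linarith
    rcases hz q1 with h1 | h1 <;> rcases hz q2 with h2 | h2 <;> rw [h1, h2] at hd
    · left; linarith
    · right; left; linarith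
    · right; right; linarith
    · left; linarith
  -- the maximizing point
  set qs : DesignPoint k := fun j => if b j = -((2:ℚ)^k) then -1 else 1 with hqs
  set t : Fin k → ℚ := fun j => b j * ((qs j : ℤ):ℚ) with ht
  have tcases : ∀ j, t j = 0 ∨ t j = (2:ℚ)^k := by
    intro j
    rcases bcases j with h | h | h
    · left
      rw [ht]; dsimp only; rw [h, zero_mul]
    · right
      rw [ht]; dsimp only
      rw [hqs]; dsimp only
      rw [if_neg (by rw [h]; intro hh; nlinarith), h]
      norm_num
    · right
      rw [ht]; dsimp only
      rw [hqs]; dsimp only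
      rw [if_pos h, h]
      norm_num
  have tnonneg : ∀ j, 0 ≤ t j := by
    intro j
    rcases tcases j with h | h <;> rw [h] <;> positivity
  have hsumt : ∑ j, t j = (2:ℚ)^k * z qs := (key qs).symm
  have hzqs : z qs = 1 := by
    rcases hz qs with h | h
    · exact h
    · exfalso
      have hnn : 0 ≤ ∑ j, t j := Finset.sum_nonneg (fun j _ => tnonneg j)
      rw [hsumt, h] at hnn
      nlinarith
  rw [hzqs, mul_one] at hsumt
  have hex : ∃ j₀, t j₀ = (2:ℚ)^k := by
    by_contra hno
    push_neg at hno
    have : ∀ j ∈ Finset.univ, t j = 0 := by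
      intro j _
      rcases tcases j with h | h
      · exact h
      · exact absurd h (hno j)
    rw [Finset.sum_eq_zero this] at hsumt
    exact absurd hsumt.symm (ne_of_gt hpow)
  obtain ⟨j₀, hj₀⟩ := hex
  have hrest : ∀ j, j ≠ j₀ → t j = 0 := by
    intro j hj
    have hsplit : ∑ i ∈ Finset.univ.erase j₀, t i = 0 := by
      have h := Finset.add_sum_erase Finset.univ t (Finset.mem_univ j₀)
      rw [hsumt, hj₀] at h
      linarith
    have := (Finset.sum_eq_zero_iff_of_nonneg (fun i _ => tnonneg i)).mp hsplit
    exact this j (Finset.mem_erase.mpr ⟨hj, Finset.mem_univ j⟩)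
  have hbzero : ∀ j, j ≠ j₀ → b j = 0 := by
    intro j hj
    have := hrest j hj
    rw [ht] at this; dsimp only at this
    rcases mul_eq_zero.mp this with h | h
    · exact h
    · exfalso
      rcases Int.units_eq_one_or (qs j) with hu | hu <;> rw [hu] at h <;> norm_num at h
  -- conclude
  refine ⟨qs j₀, j₀, fun q => ?_⟩
  have hk := key q
  have hsingle : ∑ j, b j * ((q j : ℤ):ℚ) = b j₀ * ((q j₀ : ℤ):ℚ) := by
    refine Finset.sum_eq_single j₀ (fun j _ hj => by rw [hbzero j hj, zero_mul]) ?_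
    exact fun h => absurd (Finset.mem_univ j₀) h
  have hbj₀ : b j₀ = (2:ℚ)^k * ((qs j₀ : ℤ):ℚ) := by
    rw [ht] at hj₀; dsimp only at hj₀
    rcases Int.units_eq_one_or (qs j₀) with hu | hu <;> rw [hu] at hj₀ ⊢ <;>
      push_cast at hj₀ ⊢ <;> linarith
  rw [hsingle, hbj₀] at hk
  have := mul_left_cancel₀ (ne_of_gt hpow) (by linarith [hk] : (2:ℚ)^k * z q = (2:ℚ)^k * (((qs j₀ : ℤ):ℚ) * ((q j₀ : ℤ):ℚ)))
  exact this

/-- cast of a product of units -/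
lemma prod_cast {k : ℕ} (S : Finset (Fin k)) (p : DesignPoint k) :
    (∏ j ∈ S, ((p j : ℤ):ℚ)) = (((∏ j ∈ S, p j : ℤˣ) : ℤ) : ℚ) := by
  push_cast
  rfl

lemma forward {k N : ℕ} (hN : 1 ≤ N) {π : Equiv.Perm (DesignPoint k)}
    (hπ : π ∈ GLP k N 1) :
    ∃ (ε : Fin k → ℤˣ) (σ : Equiv.Perm (Fin k)), π = signedPerm k ε σ := by
  classical
  -- each output coordinate is a signed input coordinate
  have main : ∀ i : Fin k, ∃ (e : ℤˣ) (j : Fin k), ∀ p, π p i = e * p j := by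
    intro i
    have hz : ∀ p : DesignPoint k, ((π p i : ℤ):ℚ) = 1 ∨ ((π p i : ℤ):ℚ) = -1 := by
      intro p
      rcases Int.units_eq_one_or (π p i) with h | h <;> rw [h] <;> [left; right] <;> norm_num
    have h0 : ∑ p : DesignPoint k, ((π p i : ℤ):ℚ) = 0 := by
      have := zero_sum_image hN hπ Finset.univ Finset.univ_nonempty
        (fun m => univ_zero m) i
      simpa using this
    have h2 : ∀ S : Finset (Fin k), 2 ≤ S.card →
        ∑ p : DesignPoint k, (∏ j ∈ S, ((p j : ℤ):ℚ)) * ((π p i : ℤ):ℚ) = 0 := by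
      intro S hS
      set A := Finset.univ.filter (fun p : DesignPoint k => ∏ j ∈ S, p j = 1) with hA
      have hone : (fun _ => 1 : DesignPoint k) ∈ A := by
        simp [hA]
      have hAne : A.Nonempty := ⟨_, hone⟩
      -- the complement
      have hAc : ∀ p : DesignPoint k, p ∉ A → ∏ j ∈ S, p j = -1 := by
        intro p hp
        rcases Int.units_eq_one_or (∏ j ∈ S, p j) with h | h
        · exact absurd (by simp [hA, h]) hp
        · exact h
      obtain ⟨j₁, hj₁⟩ : S.Nonempty := Finset.card_pos.mp (by omega)
      have hflip : (fun m => if m = j₁ then -1 else 1 : DesignPoint k) ∉ A := by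
        simp only [hA, Finset.mem_filter, Finset.mem_univ, true_and]
        rw [Finset.prod_ite_eq' S j₁ (fun _ => (-1 : ℤˣ)), if_pos hj₁]
        decide
      have hAcne : (Finset.univ \ A).Nonempty :=
        ⟨_, Finset.mem_sdiff.mpr ⟨Finset.mem_univ _, hflip⟩⟩
      -- coordinate sums over A and its complement vanish
      have hsumA : ∀ m, ∑ p ∈ A, ((p m : ℤ):ℚ) = 0 := fun m => AS_zero S hS m
      have hsumAc : ∀ m, ∑ p ∈ Finset.univ \ A, ((p m : ℤ):ℚ) = 0 := by
        intro m
        have hs := Finset.sum_sdiff (f := fun p : DesignPoint k => ((p m : ℤ):ℚ))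
          (Finset.subset_univ A)
        rw [hsumA m, univ_zero m] at hs
        linarith
      have himA := zero_sum_image hN hπ A hAne hsumA i
      have himAc := zero_sum_image hN hπ (Finset.univ \ A) hAcne hsumAc i
      -- split the sum
      rw [← Finset.sum_sdiff (Finset.subset_univ A)
        (f := fun p : DesignPoint k => (∏ j ∈ S, ((p j : ℤ):ℚ)) * ((π p i : ℤ):ℚ))]
      have hA1 : ∀ p ∈ A, (∏ j ∈ S, ((p j : ℤ):ℚ)) * ((π p i : ℤ):ℚ) = ((π p i : ℤ):ℚ) := by
        intro p hp
        rw [prod_cast]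
        have hp' : ∏ j ∈ S, p j = 1 := by
          rw [hA] at hp
          exact (Finset.mem_filter.mp hp).2
        rw [hp']
        norm_num
      have hA2 : ∀ p ∈ Finset.univ \ A,
          (∏ j ∈ S, ((p j : ℤ):ℚ)) * ((π p i : ℤ):ℚ) = -((π p i : ℤ):ℚ) := by
        intro p hp
        rw [prod_cast, hAc p (Finset.mem_sdiff.mp hp).2]
        push_cast
        ring
      rw [Finset.sum_congr rfl hA1, Finset.sum_congr rfl hA2, himA,
        Finset.sum_neg_distrib, himAc]
      ring
    obtain ⟨e, j, hej⟩ := extract (fun p => ((π p i : ℤ):ℚ)) hz h0 h2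
    refine ⟨e, j, fun p => ?_⟩
    have := hej p
    have hcast : ((π p i : ℤ):ℚ) = (((e * p j : ℤˣ) : ℤ):ℚ) := by
      rw [this]; push_cast; ring
    have hint : ((π p i : ℤ)) = ((e * p j : ℤˣ) : ℤ) := by exact_mod_cast hcast
    exact Units.ext hint
  choose e j hj using main
  -- j is injective
  have hjinj : Function.Injective j := by
    intro i₁ i₂ hii
    by_contra hne
    set r : DesignPoint k := fun m => if m = i₂ then -(e i₂) else e i₁ with hr
    have hu1 : e i₁ * (π⁻¹ r) (j i₂) = e i₁ := by
      have h := hj i₁ (π⁻¹ r)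
      rw [show π (π⁻¹ r) = r from π.apply_symm_apply r, hii] at h
      rw [← h]
      show (if i₁ = i₂ then -(e i₂) else e i₁) = e i₁
      rw [if_neg hne]
    have hu2 : e i₂ * (π⁻¹ r) (j i₂) = -(e i₂) := by
      have h := hj i₂ (π⁻¹ r)
      rw [show π (π⁻¹ r) = r from π.apply_symm_apply r] at h
      rw [← h]
      show (if i₂ = i₂ then -(e i₂) else e i₁) = -(e i₂)
      rw [if_pos rfl]
    have h1 : (π⁻¹ r) (j i₂) = 1 :=
      mul_left_cancel (a := e i₁) (by rw [mul_one]; exact hu1)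
    rw [h1, mul_one] at hu2
    rcases Int.units_eq_one_or (e i₂) with h | h <;> rw [h] at hu2 <;>
      exact absurd hu2 (by decide)
  have hjbij : Function.Bijective j := (Finite.injective_iff_bijective).mp hjinj
  set σ' := Equiv.ofBijective j hjbij with hσ'
  refine ⟨e, σ'.symm, Equiv.ext fun p => funext fun i => ?_⟩
  have happ : signedPerm k e σ'.symm p i = e i * p ((σ'.symm)⁻¹ i) := rfl
  rw [happ]
  have hinv : (σ'.symm)⁻¹ i = j i := rfl
  rw [hinv]
  exact hj i p

lemma signedPerm_injective (k : ℕ) :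
    Function.Injective (fun x : (Fin k → ℤˣ) × Equiv.Perm (Fin k) =>
      signedPerm k x.1 x.2) := by
  rintro ⟨ε, σ⟩ ⟨ε', σ'⟩ h
  simp only at h
  have happ : ∀ (p : DesignPoint k) (i : Fin k), ε i * p (σ⁻¹ i) = ε' i * p (σ'⁻¹ i) := by
    intro p i
    have := congrFun (congrArg (fun π : Equiv.Perm (DesignPoint k) => π p) h) i
    exact this
  have hε : ε = ε' := by
    funext i
    have := happ (fun _ => 1) i
    simpa using this
  subst hε
  have hσ : σ⁻¹ = σ'⁻¹ := by
    apply Equiv.ext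
    intro i
    by_contra hne
    have := happ (fun m => if m = σ⁻¹ i then -1 else 1) i
    rw [if_pos rfl, if_neg (fun hh : σ'⁻¹ i = σ⁻¹ i => hne hh.symm)] at this
    have h2 : (-1 : ℤˣ) = 1 := mul_left_cancel (a := ε i) this
    exact absurd h2 (by decide)
  have : σ = σ' := inv_injective hσ
  rw [this]

/-- sign of a permutation of `Fin 2` as a unit -/
def sgn2 : Equiv.Perm (Fin 2) → ℤˣ := fun g => if g = 1 then 1 else -1

lemma sgn2_mul : ∀ g h : Equiv.Perm (Fin 2), sgn2 (g * h) = sgn2 g * sgn2 h := by decide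

lemma sgn2_inj : ∀ g h : Equiv.Perm (Fin 2), sgn2 g = sgn2 h → g = h := by decide

lemma sgn2_surj : ∀ u : ℤˣ, ∃ g, sgn2 g = u := by decide

lemma signedPerm_mul (k : ℕ) (ε ε' : Fin k → ℤˣ) (σ σ' : Equiv.Perm (Fin k)) :
    signedPerm k ε σ * signedPerm k ε' σ'
      = signedPerm k (fun i => ε i * ε' (σ⁻¹ i)) (σ * σ') := by
  apply Equiv.ext
  intro p
  funext i
  show ε i * (signedPerm k ε' σ' p) (σ⁻¹ i) = (ε i * ε' (σ⁻¹ i)) * p ((σ * σ')⁻¹ i)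
  have : (signedPerm k ε' σ' p) (σ⁻¹ i) = ε' (σ⁻¹ i) * p (σ'⁻¹ (σ⁻¹ i)) := rfl
  rw [this, ← mul_assoc]
  rfl

def Phi (k : ℕ) : WreathS2Sk k →* Equiv.Perm (DesignPoint k) where
  toFun x := signedPerm k (fun i => sgn2 (x.left i)) x.right
  map_one' := by
    apply Equiv.ext
    intro p
    funext i
    show sgn2 ((1 : WreathS2Sk k).left i) * p (((1 : WreathS2Sk k).right)⁻¹ i) = p i
    have h1 : ((1 : WreathS2Sk k).left i) = 1 := rfl
    have h2 : ((1 : WreathS2Sk k).right) = 1 := rfl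
    rw [h1, h2]
    have h3 : sgn2 1 = 1 := by decide
    rw [h3, one_mul]
    rfl
  map_mul' x y := by
    show signedPerm k (fun i => sgn2 ((x*y).left i)) ((x*y).right) = _
    rw [signedPerm_mul]
    have hr : (x*y).right = x.right * y.right := rfl
    rw [← hr]
    congr 1
    funext i
    show sgn2 ((x.left * (wreathHom k x.right) y.left) i)
      = sgn2 (x.left i) * sgn2 (y.left (x.right⁻¹ i))
    rw [Pi.mul_apply, sgn2_mul]
    rfl

lemma Phi_injective (k : ℕ) : Function.Injective (Phi k) := by
  intro x y h
  have := signedPerm_injective k (a₁ := (fun i => sgn2 (x.left i), x.right))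
    (a₂ := (fun i => sgn2 (y.left i), y.right)) h
  have hl : x.left = y.left := by
    funext i
    exact sgn2_inj _ _ (congrFun (congrArg Prod.fst this) i)
  have hr : x.right = y.right := congrArg Prod.snd this
  cases x; cases y
  simp only at hl hr
  rw [hl, hr]

lemma Phi_range (k : ℕ) : ((Phi k).range : Set (Equiv.Perm (DesignPoint k)))
    = {π | ∃ (ε : Fin k → ℤˣ) (σ : Equiv.Perm (Fin k)), π = signedPerm k ε σ} := by
  ext π
  constructor
  · rintro ⟨x, rfl⟩
    exact ⟨fun i => sgn2 (x.left i), x.right, rfl⟩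
  · rintro ⟨ε, σ, rfl⟩
    choose g hg using fun i => sgn2_surj (ε i)
    refine ⟨⟨g, σ⟩, ?_⟩
    show signedPerm k (fun i => sgn2 (g i)) σ = signedPerm k ε σ
    congr 1
    funext i
    exact hg i


/-- For `t = 1`, `G^LP` is exactly the group of signed coordinate
permutations of `P`, it has order `2^k · k!`, and it is isomorphic to the wreath
product `S_2 ≀ S_k`. -/
theorem strength_one_GLP_is_wreath
    (k N : ℕ) (hk : 1 ≤ k) (hN : 1 ≤ N) :
    GLP k N 1 =
      {π | ∃ (ε : Fin k → ℤˣ) (σ : Equiv.Perm (Fin k)), π = signedPerm k ε σ} ∧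
    (GLP k N 1).ncard = 2 ^ k * Nat.factorial k ∧
    ∃ H : Subgroup (Equiv.Perm (DesignPoint k)),
      (H : Set (Equiv.Perm (DesignPoint k))) = GLP k N 1 ∧
      Nonempty (H ≃* WreathS2Sk k) := by
  have hset : GLP k N 1 =
      {π | ∃ (ε : Fin k → ℤˣ) (σ : Equiv.Perm (Fin k)), π = signedPerm k ε σ} := by
    ext π
    constructor
    · intro hπ
      exact forward hN hπ
    · rintro ⟨ε, σ, rfl⟩
      exact signed_mem k N ε σ
  refine ⟨hset, ?_, ?_⟩
  · rw [hset]
    have hrange : {π | ∃ (ε : Fin k → ℤˣ) (σ : Equiv.Perm (Fin k)), π = signedPerm k ε σ}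
        = Set.range (fun x : (Fin k → ℤˣ) × Equiv.Perm (Fin k) => signedPerm k x.1 x.2) := by
      ext π
      constructor
      · rintro ⟨ε, σ, rfl⟩; exact ⟨(ε, σ), rfl⟩
      · rintro ⟨⟨ε, σ⟩, rfl⟩; exact ⟨ε, σ, rfl⟩
    rw [hrange, ← Set.image_univ,
      Set.ncard_image_of_injective _ (signedPerm_injective k), Set.ncard_univ,
      Nat.card_eq_fintype_card, Fintype.card_prod, Fintype.card_fun,
      Fintype.card_units_int, Fintype.card_fin, Fintype.card_perm, Fintype.card_fin]
  · refine ⟨(Phi k).range, ?_, ⟨(MonoidHom.ofInjective (Phi_injective k)).symm⟩⟩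
    rw [hset]
    exact Phi_range k
end

section
/- Let t = 2, let g ∈ G^LP, and let x ∈ B with x ≠ 𝟏, with g·x = Σ_{i=1}^k λ_i x_i + Σ_{i<j} λ_{i,j} x_{i,j}. Then every coefficient λ_i (for i ∈ {1,…,k}) and λ_{i,j} (for 1 ≤ i < j ≤ k) lies in {0, 1/2, −1/2, 1, −1}. -/
namespace StrengthTwoAux

lemma units_univ : (Finset.univ : Finset ℤˣ) = {1, -1} := by decide

lemma pm_mul {a b : ℚ} (ha : a = 1 ∨ a = -1) (hb : b = 1 ∨ b = -1) :
    a * b = 1 ∨ a * b = -1 := by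
  rcases ha with rfl | rfl <;> rcases hb with rfl | rfl <;> norm_num

lemma cast_pm (a : ℤˣ) : ((a : ℤ) : ℚ) = 1 ∨ ((a : ℤ) : ℚ) = -1 := by
  rcases Int.units_eq_one_or a with rfl | rfl <;> norm_num

lemma xvec_pm {k : ℕ} (S : Finset (Fin k)) (p : DesignPoint k) :
    xvec k S p = 1 ∨ xvec k S p = -1 :=
  Finset.prod_induction (fun i => ((p i : ℤ) : ℚ)) (fun r => r = 1 ∨ r = -1)
    (fun _ _ => pm_mul) (Or.inl rfl) (fun w _ => cast_pm (p w))

lemma xvec_empty {k : ℕ} (z : DesignPoint k) : xvec k ∅ z = 1 := Finset.prod_empty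

lemma xvec_singleton {k : ℕ} (w : Fin k) (z : DesignPoint k) :
    xvec k {w} z = ((z w : ℤ) : ℚ) := Finset.prod_singleton ..

lemma sum4 {s : ℤˣ → ℤˣ → ℚ} (hs : ∀ a b, s a b = 1 ∨ s a b = -1) :
    ∃ m : ℤ, (∑ a : ℤˣ, ∑ b : ℤˣ, s a b) = 2 * m ∧ -2 ≤ m ∧ m ≤ 2 := by
  have hpm : ∀ a b : ℤˣ, ∃ e : ℤ, s a b = 2 * e - 1 ∧ 0 ≤ e ∧ e ≤ 1 := by
    intro a b
    rcases hs a b with h | h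
    · exact ⟨1, by rw [h]; norm_num, by norm_num⟩
    · exact ⟨0, by rw [h]; norm_num, by norm_num⟩
  obtain ⟨e1, he1, he1b⟩ := hpm 1 1
  obtain ⟨e2, he2, he2b⟩ := hpm 1 (-1)
  obtain ⟨e3, he3, he3b⟩ := hpm (-1) 1
  obtain ⟨e4, he4, he4b⟩ := hpm (-1) (-1)
  have hne : (1 : ℤˣ) ≠ -1 := by decide
  refine ⟨e1 + e2 + e3 + e4 - 2, ?_, by omega, by omega⟩
  rw [units_univ, Finset.sum_pair hne, Finset.sum_pair hne, Finset.sum_pair hne,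
    he1, he2, he3, he4]
  push_cast
  ring

lemma xvec_update {k : ℕ} (S : Finset (Fin k)) (z : DesignPoint k) (i : Fin k) (a : ℤˣ) :
    xvec k S (Function.update z i a) =
      (if i ∈ S then ((a : ℤ) : ℚ) else 1) * xvec k (S.erase i) z := by
  unfold xvec
  by_cases h : i ∈ S
  · rw [if_pos h, ← Finset.mul_prod_erase S _ h]
    congr 1
    · simp
    · exact Finset.prod_congr rfl fun w hw => by
        rw [Function.update_of_ne (Finset.ne_of_mem_erase hw)]
  · rw [if_neg h, one_mul, Finset.erase_eq_of_notMem h]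
    exact Finset.prod_congr rfl fun w hw => by
      rw [Function.update_of_ne (fun e : w = i => h (e ▸ hw))]

lemma master {k : ℕ} (c : Finset (Fin k) → ℚ) (y : DesignPoint k → ℚ)
    (hexp : ∀ p, y p = ∑ U ∈ Finset.univ.filter
      (fun S : Finset (Fin k) => S ≠ ∅ ∧ S.card ≤ 2), c U * xvec k U p)
    (i j : Fin k) (hij : i ≠ j) (α β : ℤˣ → ℚ) (z : DesignPoint k) :
    ∑ a : ℤˣ, ∑ b : ℤˣ, α a * β b * y (Function.update (Function.update z i a) j b)
    = ∑ U ∈ Finset.univ.filter (fun S : Finset (Fin k) => S ≠ ∅ ∧ S.card ≤ 2),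
        (c U * xvec k ((U.erase j).erase i) z) *
        ((∑ a : ℤˣ, α a * (if i ∈ U then ((a : ℤ) : ℚ) else 1)) *
         (∑ b : ℤˣ, β b * (if j ∈ U then ((b : ℤ) : ℚ) else 1))) := by
  have key : ∀ a b : ℤˣ,
      α a * β b * y (Function.update (Function.update z i a) j b)
      = ∑ U ∈ Finset.univ.filter (fun S : Finset (Fin k) => S ≠ ∅ ∧ S.card ≤ 2),
          (c U * xvec k ((U.erase j).erase i) z) *
          ((α a * (if i ∈ U then ((a : ℤ) : ℚ) else 1)) *
           (β b * (if j ∈ U then ((b : ℤ) : ℚ) else 1))) := by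
    intro a b
    rw [hexp, Finset.mul_sum]
    refine Finset.sum_congr rfl fun U _ => ?_
    rw [xvec_update U _ j b, xvec_update (U.erase j) z i a]
    have hmem : (if i ∈ U.erase j then ((a : ℤ) : ℚ) else 1)
        = (if i ∈ U then ((a : ℤ) : ℚ) else 1) := by
      simp [Finset.mem_erase, hij]
    rw [hmem]
    ring
  simp only [key]
  rw [Finset.sum_comm]
  have swap2 : ∀ b : ℤˣ, (∑ a : ℤˣ, ∑ U ∈ Finset.univ.filter
      (fun S : Finset (Fin k) => S ≠ ∅ ∧ S.card ≤ 2),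
        (c U * xvec k ((U.erase j).erase i) z) *
        ((α a * (if i ∈ U then ((a : ℤ) : ℚ) else 1)) *
         (β b * (if j ∈ U then ((b : ℤ) : ℚ) else 1))))
      = ∑ U ∈ Finset.univ.filter (fun S : Finset (Fin k) => S ≠ ∅ ∧ S.card ≤ 2),
        ∑ a : ℤˣ,
        (c U * xvec k ((U.erase j).erase i) z) *
        ((α a * (if i ∈ U then ((a : ℤ) : ℚ) else 1)) *
         (β b * (if j ∈ U then ((b : ℤ) : ℚ) else 1))) := fun b => Finset.sum_comm
  simp only [swap2]
  rw [Finset.sum_comm]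
  refine Finset.sum_congr rfl fun U _ => ?_
  conv_lhs => rw [Finset.sum_comm]
  rw [Finset.sum_mul_sum, Finset.mul_sum]
  refine Finset.sum_congr rfl fun a _ => ?_
  rw [Finset.mul_sum]

lemma sum_cast_ite {k : ℕ} (i : Fin k) (U : Finset (Fin k)) :
    (∑ a : ℤˣ, ((a : ℤ) : ℚ) * (if i ∈ U then ((a : ℤ) : ℚ) else 1))
      = if i ∈ U then 2 else 0 := by
  by_cases h : i ∈ U <;>
    simp [h, units_univ, Finset.sum_pair (show (1 : ℤˣ) ≠ -1 by decide)] <;> norm_num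

lemma sum_one_ite {k : ℕ} (i : Fin k) (U : Finset (Fin k)) :
    (∑ a : ℤˣ, (1 : ℚ) * (if i ∈ U then ((a : ℤ) : ℚ) else 1))
      = if i ∈ U then 0 else 2 := by
  by_cases h : i ∈ U <;>
    simp [h, units_univ, Finset.sum_pair (show (1 : ℤˣ) ≠ -1 by decide)] <;> norm_num

lemma filter_pair {k : ℕ} (i j : Fin k) (hij : i ≠ j) :
    ((Finset.univ.filter (fun S : Finset (Fin k) => S ≠ ∅ ∧ S.card ≤ 2)).filter
      (fun U => i ∈ U ∧ j ∈ U)) = {{i, j}} := by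
  ext U
  simp only [Finset.mem_filter, Finset.mem_univ, true_and, Finset.mem_singleton]
  constructor
  · rintro ⟨⟨hne, hcard⟩, hi, hj⟩
    refine (Finset.eq_of_subset_of_card_le ?_ ?_).symm
    · intro w hw
      simp only [Finset.mem_insert, Finset.mem_singleton] at hw
      rcases hw with rfl | rfl <;> assumption
    · rw [Finset.card_pair hij]; exact hcard
  · rintro rfl
    refine ⟨⟨?_, ?_⟩, ?_, ?_⟩ <;> simp [hij, Finset.card_pair hij]

lemma filter_single {k : ℕ} (i j : Fin k) (hij : i ≠ j) :
    ((Finset.univ.filter (fun S : Finset (Fin k) => S ≠ ∅ ∧ S.card ≤ 2)).filter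
      (fun U => i ∈ U ∧ j ∉ U))
    = insert {i} (((Finset.univ.erase j).erase i).image
        (fun w => ({i, w} : Finset (Fin k)))) := by
  ext U
  simp only [Finset.mem_filter, Finset.mem_univ, true_and, Finset.mem_insert,
    Finset.mem_image, Finset.mem_erase]
  constructor
  · rintro ⟨⟨hne, hcard⟩, hi, hj⟩
    have hpos : 1 ≤ U.card := Finset.card_pos.mpr (Finset.nonempty_iff_ne_empty.mpr hne)
    have : U.card = 1 ∨ U.card = 2 := by omega
    rcases this with h1 | h2
    · obtain ⟨a, rfl⟩ := Finset.card_eq_one.mp h1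
      left
      simp only [Finset.mem_singleton] at hi
      rw [hi]
    · obtain ⟨a, b, hab, rfl⟩ := Finset.card_eq_two.mp h2
      right
      simp only [Finset.mem_insert, Finset.mem_singleton] at hi hj
      push_neg at hj
      rcases hi with rfl | rfl
      · exact ⟨b, ⟨fun e => hab e.symm, ⟨fun e => hj.2 e.symm, trivial⟩⟩, rfl⟩
      · exact ⟨a, ⟨fun e => hab e, ⟨fun e => hj.1 e.symm, trivial⟩⟩, by rw [Finset.pair_comm]⟩
  · rintro (rfl | ⟨w, ⟨hwi, hwj, -⟩, rfl⟩)
    · refine ⟨⟨by simp, by simp⟩, by simp, by simp [Ne.symm hij]⟩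
    · have hiw : i ≠ w := Ne.symm hwi
      refine ⟨⟨by simp, by rw [Finset.card_pair hiw]⟩, by simp, ?_⟩
      simp only [Finset.mem_insert, Finset.mem_singleton]
      push_neg
      exact ⟨Ne.symm hij, Ne.symm hwj⟩

lemma erase_pair {k : ℕ} (i j : Fin k) :
    ((({i, j} : Finset (Fin k)).erase j).erase i) = ∅ := by
  ext w
  simp only [Finset.mem_erase, Finset.mem_insert, Finset.mem_singleton,
    Finset.notMem_empty, iff_false]
  tauto

lemma erase_single {k : ℕ} (i j : Fin k) :
    ((({i} : Finset (Fin k)).erase j).erase i) = ∅ := by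
  ext w
  simp only [Finset.mem_erase, Finset.mem_singleton, Finset.notMem_empty, iff_false]
  tauto

lemma erase_iw {k : ℕ} (i j w : Fin k) (hwi : w ≠ i) (hwj : w ≠ j) :
    ((({i, w} : Finset (Fin k)).erase j).erase i) = {w} := by
  ext u
  simp only [Finset.mem_erase, Finset.mem_insert, Finset.mem_singleton]
  constructor
  · rintro ⟨h1, h2, (rfl | rfl)⟩
    · exact absurd rfl h1
    · rfl
  · rintro rfl
    exact ⟨hwi, hwj, Or.inr rfl⟩

lemma T11_eval {k : ℕ} (c : Finset (Fin k) → ℚ) (y : DesignPoint k → ℚ)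
    (hexp : ∀ p, y p = ∑ U ∈ Finset.univ.filter
      (fun S : Finset (Fin k) => S ≠ ∅ ∧ S.card ≤ 2), c U * xvec k U p)
    (i j : Fin k) (hij : i ≠ j) (z : DesignPoint k) :
    ∑ a : ℤˣ, ∑ b : ℤˣ, ((a : ℤ) : ℚ) * ((b : ℤ) : ℚ) *
        y (Function.update (Function.update z i a) j b)
      = 4 * c {i, j} := by
  have h := master c y hexp i j hij (fun a => ((a : ℤ) : ℚ)) (fun b => ((b : ℤ) : ℚ)) z
  rw [h]
  have step : ∀ U ∈ Finset.univ.filter (fun S : Finset (Fin k) => S ≠ ∅ ∧ S.card ≤ 2),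
      (c U * xvec k ((U.erase j).erase i) z) *
        ((∑ a : ℤˣ, ((a : ℤ) : ℚ) * (if i ∈ U then ((a : ℤ) : ℚ) else 1)) *
         (∑ b : ℤˣ, ((b : ℤ) : ℚ) * (if j ∈ U then ((b : ℤ) : ℚ) else 1)))
      = if i ∈ U ∧ j ∈ U then (c U * xvec k ((U.erase j).erase i) z) * 4 else 0 := by
    intro U _
    rw [sum_cast_ite, sum_cast_ite]
    by_cases hi : i ∈ U <;> by_cases hj : j ∈ U
    · rw [if_pos hi, if_pos hj, if_pos ⟨hi, hj⟩]; ring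
    · rw [if_pos hi, if_neg hj, if_neg (by tauto)]; ring
    · rw [if_neg hi, if_pos hj, if_neg (by tauto)]; ring
    · rw [if_neg hi, if_neg hj, if_neg (by tauto)]; ring
  rw [Finset.sum_congr rfl step, ← Finset.sum_filter, filter_pair i j hij,
    Finset.sum_singleton, erase_pair, xvec_empty]
  ring

lemma T10_eval {k : ℕ} (c : Finset (Fin k) → ℚ) (y : DesignPoint k → ℚ)
    (hexp : ∀ p, y p = ∑ U ∈ Finset.univ.filter
      (fun S : Finset (Fin k) => S ≠ ∅ ∧ S.card ≤ 2), c U * xvec k U p)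
    (i j : Fin k) (hij : i ≠ j) (z : DesignPoint k) :
    ∑ a : ℤˣ, ∑ b : ℤˣ, ((a : ℤ) : ℚ) * (1 : ℚ) *
        y (Function.update (Function.update z i a) j b)
      = 4 * (c {i} + ∑ w ∈ (Finset.univ.erase j).erase i,
          c {i, w} * ((z w : ℤ) : ℚ)) := by
  have h := master c y hexp i j hij (fun a => ((a : ℤ) : ℚ)) (fun _ => (1 : ℚ)) z
  rw [h]
  have step : ∀ U ∈ Finset.univ.filter (fun S : Finset (Fin k) => S ≠ ∅ ∧ S.card ≤ 2),
      (c U * xvec k ((U.erase j).erase i) z) *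
        ((∑ a : ℤˣ, ((a : ℤ) : ℚ) * (if i ∈ U then ((a : ℤ) : ℚ) else 1)) *
         (∑ b : ℤˣ, (1 : ℚ) * (if j ∈ U then ((b : ℤ) : ℚ) else 1)))
      = if i ∈ U ∧ j ∉ U then (c U * xvec k ((U.erase j).erase i) z) * 4 else 0 := by
    intro U _
    rw [sum_cast_ite, sum_one_ite]
    by_cases hi : i ∈ U <;> by_cases hj : j ∈ U
    · rw [if_pos hi, if_pos hj, if_neg (by tauto)]; ring
    · rw [if_pos hi, if_neg hj, if_pos ⟨hi, hj⟩]; ring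
    · rw [if_neg hi, if_pos hj, if_neg (by tauto)]; ring
    · rw [if_neg hi, if_neg hj, if_neg (by tauto)]; ring
  rw [Finset.sum_congr rfl step, ← Finset.sum_filter, filter_single i j hij]
  have hnot : ({i} : Finset (Fin k)) ∉ ((Finset.univ.erase j).erase i).image
      (fun w => ({i, w} : Finset (Fin k))) := by
    intro hmem
    obtain ⟨w, hw, heq⟩ := Finset.mem_image.mp hmem
    have hwiD : w ≠ i := (Finset.mem_erase.mp hw).1
    have : w ∈ ({i} : Finset (Fin k)) := by
      rw [← heq]; exact Finset.mem_insert.mpr (Or.inr (Finset.mem_singleton_self w))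
    exact hwiD (Finset.mem_singleton.mp this)
  rw [Finset.sum_insert hnot]
  have hinj : ∀ w₁ ∈ (Finset.univ.erase j).erase i, ∀ w₂ ∈ (Finset.univ.erase j).erase i,
      ({i, w₁} : Finset (Fin k)) = {i, w₂} → w₁ = w₂ := by
    intro w₁ hw₁ w₂ hw₂ h12
    have hw₁i : w₁ ≠ i := (Finset.mem_erase.mp hw₁).1
    have : w₁ ∈ ({i, w₂} : Finset (Fin k)) := h12 ▸ Finset.mem_insert.mpr
      (Or.inr (Finset.mem_singleton_self w₁))
    rcases Finset.mem_insert.mp this with h | h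
    · exact absurd h hw₁i
    · exact Finset.mem_singleton.mp h
  rw [Finset.sum_image hinj]
  rw [erase_single i j, xvec_empty]
  have himg : ∀ w ∈ (Finset.univ.erase j).erase i,
      (c {i, w} * xvec k ((({i, w} : Finset (Fin k)).erase j).erase i) z) * 4
      = 4 * (c {i, w} * ((z w : ℤ) : ℚ)) := by
    intro w hw
    have hwi : w ≠ i := (Finset.mem_erase.mp hw).1
    have hwj : w ≠ j := ((Finset.mem_erase.mp hw).2 |> Finset.mem_erase.mp).1
    rw [erase_iw i j w hwi hwj, xvec_singleton]
    ring
  rw [Finset.sum_congr rfl himg, ← Finset.mul_sum]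
  ring


lemma half_mem {r : ℚ} (hm : ∃ m : ℤ, r = m/2) (h1 : -1 ≤ r) (h2 : r ≤ 1) :
    r ∈ ({0, 1/2, -(1/2), 1, -1} : Set ℚ) := by
  obtain ⟨m, rfl⟩ := hm
  have hm1 : (-2 : ℚ) ≤ (m : ℚ) := by linarith
  have hm2 : (m : ℚ) ≤ 2 := by linarith
  have hm1' : -2 ≤ m := by exact_mod_cast hm1
  have hm2' : m ≤ 2 := by exact_mod_cast hm2
  interval_cases m <;> norm_num [Set.mem_insert_iff, Set.mem_singleton_iff]
end StrengthTwoAux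

open StrengthTwoAux

/-- For `t = 2`, `g ∈ G^LP` and `x ∈ B` with `x ≠ 𝟏`, writing
`g·x = Σ_i λ_i x_i + Σ_{i<j} λ_{i,j} x_{i,j}` (coefficients indexed by the
nonempty `S` with `|S| ≤ 2`), every coefficient lies in `{0, 1/2, -1/2, 1, -1}`. -/
theorem strength_two_coefficients_in_zero_half_one
    (k N : ℕ) (hk : 2 ≤ k) (hN : 1 ≤ N)
    (g : Equiv.Perm (DesignPoint k)) (hg : g ∈ GLP k N 2)
    (x : DesignPoint k → ℚ)
    (hx : ∃ T : Finset (Fin k), T ≠ ∅ ∧ T.card ≤ 2 ∧ x = xvec k T)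
    (c : Finset (Fin k) → ℚ)
    (hcoef : permVec k g x = fun p =>
      ∑ S ∈ Finset.univ.filter (fun S : Finset (Fin k) => S ≠ ∅ ∧ S.card ≤ 2),
        c S * xvec k S p) :
    ∀ S : Finset (Fin k), S ≠ ∅ → S.card ≤ 2 →
      c S ∈ ({0, 1/2, -(1/2), 1, -1} : Set ℚ) := by

  obtain ⟨T, hTne, hTcard, hxT⟩ := hx
  set y : DesignPoint k → ℚ := permVec k g x with hy_def
  have hy : ∀ p, y p = 1 ∨ y p = -1 := by
    intro p
    have := xvec_pm T (g⁻¹ p)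
    rw [← hxT] at this
    exact this
  have hexp : ∀ p, y p = ∑ U ∈ Finset.univ.filter
      (fun S : Finset (Fin k) => S ≠ ∅ ∧ S.card ≤ 2), c U * xvec k U p :=
    fun p => congrFun hcoef p
  -- pair coefficients
  have pair : ∀ i j : Fin k, i ≠ j →
      (∃ m : ℤ, c {i, j} = m/2) ∧ -1 ≤ c {i, j} ∧ c {i, j} ≤ 1 := by
    intro i j hij
    have hT := T11_eval c y hexp i j hij (fun _ => 1)
    have hs : ∀ a b : ℤˣ, ((a : ℤ) : ℚ) * ((b : ℤ) : ℚ) *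
        y (Function.update (Function.update (fun _ => (1 : ℤˣ)) i a) j b) = 1 ∨
        ((a : ℤ) : ℚ) * ((b : ℤ) : ℚ) *
        y (Function.update (Function.update (fun _ => (1 : ℤˣ)) i a) j b) = -1 :=
      fun a b => pm_mul (pm_mul (cast_pm a) (cast_pm b)) (hy _)
    obtain ⟨m, hm, hm1, hm2⟩ := sum4 hs
    have e : 4 * c {i, j} = 2 * m := hT.symm.trans hm
    have hm1' : (-2 : ℚ) ≤ (m : ℚ) := by exact_mod_cast hm1
    have hm2' : (m : ℚ) ≤ 2 := by exact_mod_cast hm2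
    refine ⟨⟨m, by linarith⟩, by linarith, by linarith⟩
  -- single coefficients
  have single : ∀ i : Fin k,
      (∃ m : ℤ, c {i} = m/2) ∧ -1 ≤ c {i} ∧ c {i} ≤ 1 := by
    intro i
    obtain ⟨j, hj⟩ := Fintype.exists_ne_of_one_lt_card
      (by simp only [Fintype.card_fin]; omega) i
    have hij : i ≠ j := Ne.symm hj
    have h1 := T10_eval c y hexp i j hij (fun _ => 1)
    have h2 := T10_eval c y hexp i j hij (fun _ => -1)
    have hs1 : ∀ a b : ℤˣ, ((a : ℤ) : ℚ) * (1 : ℚ) *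
        y (Function.update (Function.update (fun _ => (1 : ℤˣ)) i a) j b) = 1 ∨
        ((a : ℤ) : ℚ) * (1 : ℚ) *
        y (Function.update (Function.update (fun _ => (1 : ℤˣ)) i a) j b) = -1 :=
      fun a b => pm_mul (pm_mul (cast_pm a) (Or.inl rfl)) (hy _)
    have hs2 : ∀ a b : ℤˣ, ((a : ℤ) : ℚ) * (1 : ℚ) *
        y (Function.update (Function.update (fun _ => (-1 : ℤˣ)) i a) j b) = 1 ∨
        ((a : ℤ) : ℚ) * (1 : ℚ) *
        y (Function.update (Function.update (fun _ => (-1 : ℤˣ)) i a) j b) = -1 :=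
      fun a b => pm_mul (pm_mul (cast_pm a) (Or.inl rfl)) (hy _)
    obtain ⟨m1, hm1, hm1a, hm1b⟩ := sum4 hs1
    obtain ⟨m2, hm2, hm2a, hm2b⟩ := sum4 hs2
    have e1 : 4 * (c {i} + ∑ w ∈ (Finset.univ.erase j).erase i,
        c {i, w} * ((((fun _ => (1 : ℤˣ)) w : ℤˣ) : ℤ) : ℚ)) = 2 * m1 := h1.symm.trans hm1
    have e2 : 4 * (c {i} + ∑ w ∈ (Finset.univ.erase j).erase i,
        c {i, w} * ((((fun _ => (-1 : ℤˣ)) w : ℤˣ) : ℤ) : ℚ)) = 2 * m2 := h2.symm.trans hm2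
    simp only [Units.val_one, Int.cast_one, mul_one] at e1
    simp only [Units.val_neg, Units.val_one, Int.cast_neg, Int.cast_one, mul_neg_one] at e2
    rw [Finset.sum_neg_distrib] at e2
    -- half-integrality of the pair sum
    have hhalf : ∀ w ∈ (Finset.univ.erase j).erase i, ∃ m : ℤ, c {i, w} = m/2 := by
      intro w hw
      exact (pair i w (Ne.symm (Finset.mem_erase.mp hw).1)).1
    choose! M hM using hhalf
    have hsum : (∑ w ∈ (Finset.univ.erase j).erase i, c {i, w})
        = ((∑ w ∈ (Finset.univ.erase j).erase i, M w : ℤ) : ℚ) / 2 := by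
      rw [Finset.sum_congr rfl hM, ← Finset.sum_div]
      push_cast
      ring
    rw [hsum] at e1 e2
    have hm1' : (-2 : ℚ) ≤ (m1 : ℚ) := by exact_mod_cast hm1a
    have hm1'' : (m1 : ℚ) ≤ 2 := by exact_mod_cast hm1b
    have hm2' : (-2 : ℚ) ≤ (m2 : ℚ) := by exact_mod_cast hm2a
    have hm2'' : (m2 : ℚ) ≤ 2 := by exact_mod_cast hm2b
    refine ⟨⟨m1 - (∑ w ∈ (Finset.univ.erase j).erase i, M w), ?_⟩, by linarith, by linarith⟩
    rw [Int.cast_sub]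
    linarith
  -- conclude
  intro S hSne hScard
  have hpos : 1 ≤ S.card := Finset.card_pos.mpr (Finset.nonempty_iff_ne_empty.mpr hSne)
  have hcases : S.card = 1 ∨ S.card = 2 := by omega
  rcases hcases with h1 | h2
  · obtain ⟨i, rfl⟩ := Finset.card_eq_one.mp h1
    obtain ⟨hh, hb1, hb2⟩ := single i
    exact half_mem hh hb1 hb2
  · obtain ⟨i, j, hij, rfl⟩ := Finset.card_eq_two.mp h2
    obtain ⟨hh, hb1, hb2⟩ := pair i j hij
    exact half_mem hh hb1 hb2
end

section
/- Let t = 2, let g ∈ G^LP, and let x ∈ B with x ≠ 𝟏. Then either g·x = ±x_S for some S ⊆ {1,…,k} with 1 ≤ |S| ≤ 2 (i.e. ±x_i for a main effect or ±x_{i,j} for a two-factor interaction), or g·x = ±(1/2)u_a ± (1/2)u_b ± (1/2)u_c ± (1/2)u_d for four distinct basis vectors u_a, u_b, u_c, u_d ∈ B \ {𝟏} (each a main effect or a two-factor interaction), with some choice of signs. -/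
namespace OAStrengthTwoAux

variable {k : ℕ}

lemma usq (u : ℤˣ) : u * u = 1 := by
  rcases Int.units_eq_one_or u with h | h <;> rw [h] <;> rfl

lemma xvec_pm (S : Finset (Fin k)) (p : DesignPoint k) :
    xvec k S p = 1 ∨ xvec k S p = -1 := by
  have h : xvec k S p = ((↑(∏ i ∈ S, p i) : ℤ) : ℚ) := by
    unfold xvec; push_cast; rfl
  rcases Int.units_eq_one_or (∏ i ∈ S, p i) with h1 | h1 <;> rw [h, h1] <;> simp

lemma xvec_mul (S S' : Finset (Fin k)) (p : DesignPoint k) :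
    xvec k S p * xvec k S' p = xvec k (symmDiff S S') p := by
  unfold xvec
  rw [← Finset.prod_union_inter, symmDiff_def]
  have h : S ∪ S' = (S \ S' ⊔ S' \ S) ∪ (S ∩ S') := by
    ext a; simp [Finset.mem_union, Finset.mem_sdiff, Finset.mem_inter]; tauto
  rw [h, Finset.prod_union (by
    simp only [Finset.disjoint_left, Finset.sup_eq_union, Finset.mem_union,
      Finset.mem_sdiff, Finset.mem_inter]
    rintro a (⟨_, h⟩ | ⟨_, h⟩) ⟨h1, h2⟩ <;> tauto)]
  have hsq : (∏ i ∈ S ∩ S', ((p i : ℤ) : ℚ)) * (∏ i ∈ S ∩ S', ((p i : ℤ) : ℚ)) = 1 := by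
    rw [← Finset.prod_mul_distrib]
    apply Finset.prod_eq_one
    intro i _
    rcases Int.units_eq_one_or (p i) with h | h <;> rw [h] <;> norm_num
  rw [mul_assoc, hsq, mul_one]

/-- flip coordinate i -/
def flip (i : Fin k) (p : DesignPoint k) : DesignPoint k :=
  Function.update p i (-(p i))

lemma flip_flip (i : Fin k) (p : DesignPoint k) : flip i (flip i p) = p := by
  funext j
  by_cases h : j = i
  · subst h; simp [flip]
  · simp [flip, Function.update_of_ne h]

lemma xvec_update_notMem {i : Fin k} {S : Finset (Fin k)} (h : i ∉ S)
    (p : DesignPoint k) (a : ℤˣ) : xvec k S (Function.update p i a) = xvec k S p := by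
  unfold xvec
  refine Finset.prod_congr rfl fun j hj => ?_
  rw [Function.update_of_ne (by rintro rfl; exact h hj)]

lemma xvec_flip_mem {i : Fin k} {S : Finset (Fin k)} (h : i ∈ S)
    (p : DesignPoint k) : xvec k S (flip i p) = - xvec k S p := by
  unfold xvec flip
  rw [← Finset.mul_prod_erase _ _ h, ← Finset.mul_prod_erase _ (fun j => ((p j : ℤ) : ℚ)) h]
  have h1 : ((Function.update p i (-(p i)) i : ℤ) : ℚ) = -((p i : ℤ) : ℚ) := by simp
  have h2 : ∏ j ∈ S.erase i, ((Function.update p i (-(p i)) j : ℤ) : ℚ)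
      = ∏ j ∈ S.erase i, ((p j : ℤ) : ℚ) := by
    refine Finset.prod_congr rfl fun j hj => ?_
    rw [Function.update_of_ne (Finset.ne_of_mem_erase hj)]
  rw [h1, h2]; ring

lemma xvec_flip_notMem {i : Fin k} {S : Finset (Fin k)} (h : i ∉ S)
    (p : DesignPoint k) : xvec k S (flip i p) = xvec k S p :=
  xvec_update_notMem h p _

lemma xvec_neg (S : Finset (Fin k)) (p : DesignPoint k) :
    xvec k S (-p) = (-1 : ℚ) ^ S.card * xvec k S p := by
  unfold xvec
  have h : ∀ i ∈ S, (((-p) i : ℤ) : ℚ) = (-1) * ((p i : ℤ) : ℚ) := by intro i _; simp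
  rw [Finset.prod_congr rfl h, Finset.prod_mul_distrib, Finset.prod_const]

/-- the flip as an equiv -/
def flipEquiv (i : Fin k) : Equiv.Perm (DesignPoint k) :=
  ⟨flip i, flip i, flip_flip i, flip_flip i⟩

lemma sum_reindex_flip (i : Fin k) (f : DesignPoint k → ℚ) :
    ∑ p, f p = ∑ p, f (flip i p) :=
  (Fintype.sum_equiv (flipEquiv i) _ _ (fun _ => rfl)).symm

lemma sum_xvec_eq_zero {S : Finset (Fin k)} (hS : S ≠ ∅) :
    ∑ p, xvec k S p = 0 := by
  obtain ⟨i, hi⟩ := Finset.nonempty_iff_ne_empty.2 hS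
  have h := sum_reindex_flip i (xvec k S)
  have h2 : ∑ p, xvec k S (flip i p) = -∑ p, xvec k S p := by
    rw [← Finset.sum_neg_distrib]
    exact Finset.sum_congr rfl fun p _ => xvec_flip_mem hi p
  rw [h2] at h
  linarith

lemma xvec_empty (p : DesignPoint k) : xvec k ∅ p = 1 := by simp [xvec]

lemma sum_xvec_mul (S S' : Finset (Fin k)) :
    ∑ p, xvec k S p * xvec k S' p = if S = S' then (2 ^ k : ℚ) else 0 := by
  rw [Finset.sum_congr rfl fun p _ => xvec_mul S S' p]
  by_cases hss : S = S'
  · subst hss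
    rw [if_pos rfl, symmDiff_self]
    have h : ∀ p : DesignPoint k, xvec k (⊥ : Finset (Fin k)) p = 1 := fun p => xvec_empty p
    rw [Finset.sum_congr rfl fun p _ => h p, Finset.sum_const, Finset.card_univ]
    simp
  · rw [if_neg hss]
    exact sum_xvec_eq_zero (by simpa [symmDiff_eq_bot, ← Finset.bot_eq_empty] using hss)

lemma xvec_mul_point (S : Finset (Fin k)) (p q : DesignPoint k) :
    xvec k S p * xvec k S q = xvec k S (p * q) := by
  unfold xvec
  rw [← Finset.prod_mul_distrib]
  refine Finset.prod_congr rfl fun i _ => ?_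
  rw [Pi.mul_apply, Units.val_mul]
  push_cast
  ring

/-- involution S ↦ S ∆ {i} on subsets -/
def sdEquiv (i : Fin k) : Equiv.Perm (Finset (Fin k)) :=
  Function.Involutive.toPerm (fun S => symmDiff S {i})
    (fun S => symmDiff_symmDiff_cancel_right {i} S)

lemma sum_subsets_xvec (r : DesignPoint k) :
    ∑ S : Finset (Fin k), xvec k S r = if r = 1 then (2 ^ k : ℚ) else 0 := by
  by_cases hr : r = 1
  · subst hr
    rw [if_pos rfl]
    have h : ∀ S : Finset (Fin k), xvec k S 1 = 1 := by
      intro S; unfold xvec; apply Finset.prod_eq_one; intro i _; rfl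
    rw [Finset.sum_congr rfl fun S _ => h S, Finset.sum_const, Finset.card_univ]
    simp
  · rw [if_neg hr]
    have hex : ∃ i, r i ≠ 1 := by
      by_contra h
      push_neg at h
      exact hr (funext h)
    obtain ⟨i, hi⟩ := hex
    have hri : ((r i : ℤ) : ℚ) = -1 := by
      rcases Int.units_eq_one_or (r i) with h | h
      · exact absurd h hi
      · rw [h]; simp
    have key : ∀ S : Finset (Fin k), xvec k (symmDiff S {i}) r = - xvec k S r := by
      intro S
      rw [← xvec_mul]
      have h : xvec k {i} r = -1 := by simp [xvec, hri]
      rw [h]; ring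
    have h := Fintype.sum_equiv (sdEquiv i) (fun S => xvec k (sdEquiv i S) r)
      (fun S => xvec k S r) (fun S => rfl)
    have h2 : ∑ S : Finset (Fin k), xvec k (sdEquiv i S) r
        = -∑ S : Finset (Fin k), xvec k S r := by
      rw [← Finset.sum_neg_distrib]
      exact Finset.sum_congr rfl fun S _ => key S
    rw [h2] at h
    linarith

lemma mul_eq_one_iff_eq (p q : DesignPoint k) : p * q = 1 ↔ p = q := by
  constructor
  · intro h
    funext i
    have h2 : p i * q i = 1 := congrFun h i
    rcases Int.units_eq_one_or (p i) with h3 | h3 <;>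
      rcases Int.units_eq_one_or (q i) with h4 | h4 <;>
      rw [h3, h4] <;> rw [h3, h4] at h2 <;> first | rfl | (exfalso; revert h2; decide)
  · rintro rfl
    funext i
    exact usq _

lemma sum_subsets_xvec_mul (p q : DesignPoint k) :
    ∑ S : Finset (Fin k), xvec k S p * xvec k S q = if p = q then (2 ^ k : ℚ) else 0 := by
  rw [Finset.sum_congr rfl fun S _ => xvec_mul_point S p q, sum_subsets_xvec]
  congr 1
  simp only [eq_iff_iff]
  exact mul_eq_one_iff_eq p q

lemma inversion (y : DesignPoint k → ℚ) (p : DesignPoint k) :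
    y p = (2 ^ k : ℚ)⁻¹ * ∑ S : Finset (Fin k), (∑ q, y q * xvec k S q) * xvec k S p := by
  have h : ∑ S : Finset (Fin k), (∑ q, y q * xvec k S q) * xvec k S p
      = ∑ q, y q * ∑ S : Finset (Fin k), xvec k S q * xvec k S p := by
    rw [Finset.sum_congr rfl fun S (_ : S ∈ Finset.univ) => Finset.sum_mul _ _ (xvec k S p)]
    rw [Finset.sum_comm]
    refine Finset.sum_congr rfl fun q _ => ?_
    rw [Finset.mul_sum]
    exact Finset.sum_congr rfl fun S _ => by ring
  rw [h, Finset.sum_congr rfl fun q (_ : q ∈ Finset.univ) => by rw [sum_subsets_xvec_mul]]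
  have h3 : ∀ q : DesignPoint k, (y q * if q = p then (2^k:ℚ) else 0)
      = if q = p then y q * 2^k else 0 := by
    intro q; split <;> ring
  rw [Finset.sum_congr rfl fun q _ => h3 q, Finset.sum_ite_eq' Finset.univ p]
  have h2 : (2:ℚ)^k ≠ 0 := by positivity
  simp only [Finset.mem_univ, if_true]
  field_simp

lemma one_mem_GLP (N t : ℕ) : (1 : Equiv.Perm (DesignPoint k)) ∈ GLP k N t := by
  intro f hf
  have h : permVec k 1 f = f := by funext p; rfl
  rwa [h]

lemma mul_mem_GLP {N t : ℕ} {π σ : Equiv.Perm (DesignPoint k)}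
    (hπ : π ∈ GLP k N t) (hσ : σ ∈ GLP k N t) : π * σ ∈ GLP k N t := by
  intro f hf
  have h : permVec k (π * σ) f = permVec k π (permVec k σ f) := by
    funext p; simp [permVec, mul_inv_rev]
  rw [h]
  exact hπ _ (hσ _ hf)

lemma pow_mem_GLP {N t : ℕ} {g : Equiv.Perm (DesignPoint k)}
    (hg : g ∈ GLP k N t) : ∀ n : ℕ, g ^ n ∈ GLP k N t := by
  intro n
  induction n with
  | zero => simpa using one_mem_GLP N t
  | succ m ih => rw [pow_succ]; exact mul_mem_GLP ih hg

lemma inv_mem_GLP {N t : ℕ} {g : Equiv.Perm (DesignPoint k)}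
    (hg : g ∈ GLP k N t) : g⁻¹ ∈ GLP k N t := by
  have hord : g ^ (orderOf g) = 1 := pow_orderOf_eq_one g
  have hpos : 0 < orderOf g := orderOf_pos g
  have h : g⁻¹ = g ^ (orderOf g - 1) := by
    have h1 : g ^ (orderOf g - 1) * g = 1 := by
      rw [← pow_succ, Nat.sub_add_cancel hpos]; exact hord
    exact (inv_eq_of_mul_eq_one_left h1)
  rw [h]
  exact pow_mem_GLP hg _

lemma y_sum_zero {g : Equiv.Perm (DesignPoint k)} {T : Finset (Fin k)} (hT : T ≠ ∅) :
    ∑ q, xvec k T (g⁻¹ q) = 0 := by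
  have h := Fintype.sum_equiv g (fun p => xvec k T p) (fun q => xvec k T (g⁻¹ q))
    (fun p => by simp)
  rw [← h]
  exact sum_xvec_eq_zero hT

lemma coeff_vanish_high {N : ℕ} (hN : 1 ≤ N) {g : Equiv.Perm (DesignPoint k)}
    (hg : g ∈ GLP k N 2) {T : Finset (Fin k)} (hT : T ≠ ∅) (hTc : T.card ≤ 2)
    {S : Finset (Fin k)} (hS3 : 3 ≤ S.card) :
    ∑ q, xvec k T (g⁻¹ q) * xvec k S q = 0 := by
  have h2k : (0:ℚ) < 2 ^ k := by positivity
  have hNpos : (0:ℚ) < N := by exact_mod_cast hN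
  set f : DesignPoint k → ℚ := fun p => (N : ℚ) / 2 ^ k * (1 + xvec k S p) with hf
  have hSne : S ≠ ∅ := by
    intro h; rw [h] at hS3; simp at hS3
  have hfeas : f ∈ feas k N 2 := by
    refine ⟨?_, ?_, ?_⟩
    · intro p
      rcases xvec_pm S p with h | h <;> rw [hf] <;> simp only [h] <;> positivity
    · have hpt : ∀ p, f p = (N:ℚ)/2^k * 1 + (N:ℚ)/2^k * xvec k S p := fun p => by
        show (N:ℚ)/2^k * (1 + xvec k S p) = _; ring
      rw [Finset.sum_congr rfl fun p _ => hpt p, Finset.sum_add_distrib, ← Finset.mul_sum,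
        ← Finset.mul_sum, sum_xvec_eq_zero hSne, mul_zero, add_zero]
      simp only [Finset.sum_const, Finset.card_univ, nsmul_eq_mul]
      have hcard : (Fintype.card (DesignPoint k) : ℚ) = 2 ^ k := by simp
      rw [hcard]
      field_simp
    · intro S' hS' hS'c
      have hne : S' ≠ S := by
        intro h; rw [h] at hS'c; omega
      have hpt : ∀ p, xvec k S' p * f p
          = (N:ℚ)/2^k * xvec k S' p + (N:ℚ)/2^k * (xvec k S' p * xvec k S p) := fun p => by
        show xvec k S' p * ((N:ℚ)/2^k * (1 + xvec k S p)) = _; ring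
      rw [Finset.sum_congr rfl fun p _ => hpt p, Finset.sum_add_distrib, ← Finset.mul_sum,
        ← Finset.mul_sum, sum_xvec_eq_zero hS', sum_xvec_mul, if_neg hne]
      ring
  have hmem := inv_mem_GLP hg f hfeas
  obtain ⟨-, -, hc⟩ := hmem
  have hcT := hc T hT hTc
  have hre : ∑ p, xvec k T p * permVec k g⁻¹ f p = ∑ q, xvec k T (g⁻¹ q) * f q := by
    refine Fintype.sum_equiv g (fun p => xvec k T p * permVec k g⁻¹ f p)
      (fun q => xvec k T (g⁻¹ q) * f q) (fun p => by simp [permVec])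
  rw [hre] at hcT
  have hpt2 : ∀ q, xvec k T (g⁻¹ q) * f q
      = (N:ℚ)/2^k * xvec k T (g⁻¹ q) + (N:ℚ)/2^k * (xvec k T (g⁻¹ q) * xvec k S q) := fun q => by
    show xvec k T (g⁻¹ q) * ((N:ℚ)/2^k * (1 + xvec k S q)) = _; ring
  rw [Finset.sum_congr rfl fun q _ => hpt2 q, Finset.sum_add_distrib, ← Finset.mul_sum,
    ← Finset.mul_sum, y_sum_zero hT, mul_zero, zero_add] at hcT
  have hne0 : (N:ℚ)/2^k ≠ 0 := by positivity
  exact (mul_eq_zero.1 hcT).resolve_left hne0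

section Granularity
variable (y : DesignPoint k → ℚ) (c : Finset (Fin k) → ℚ)

lemma coeff_singleton
    (hy : ∀ p, y p = ∑ S : Finset (Fin k), c S * xvec k S p)
    (hpm : ∀ p, y p = 1 ∨ y p = -1)
    (hc3 : ∀ S : Finset (Fin k), 3 ≤ S.card → c S = 0)
    (i : Fin k) :
    c {i} = 0 ∨ c {i} = 1/2 ∨ c {i} = -(1/2) ∨ c {i} = 1 ∨ c {i} = -1 := by
  set p : DesignPoint k := fun _ => 1 with hp
  have key : y p - y (-p) - y (flip i p) + y (-(flip i p))
      = 4 * c {i} * xvec k {i} p := by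
    rw [hy p, hy (-p), hy (flip i p), hy (-(flip i p))]
    rw [← Finset.sum_sub_distrib, ← Finset.sum_sub_distrib, ← Finset.sum_add_distrib]
    rw [Finset.sum_eq_single {i}]
    · rw [xvec_flip_mem (Finset.mem_singleton_self i) p,
        xvec_neg {i} p, xvec_neg {i} (flip i p),
        xvec_flip_mem (Finset.mem_singleton_self i) p]
      simp only [Finset.card_singleton, pow_one]
      ring
    · intro S _ hSne
      by_cases hiS : i ∈ S
      · rcases Nat.even_or_odd S.card with hpar | hpar
        · rw [xvec_flip_mem hiS p, xvec_neg S p, xvec_neg S (flip i p),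
            xvec_flip_mem hiS p, hpar.neg_one_pow]
          ring
        · have h3 : 3 ≤ S.card := by
            have hne1 : S.card ≠ 1 := by
              intro h'
              obtain ⟨a, ha⟩ := Finset.card_eq_one.1 h'
              rw [ha] at hiS
              rw [Finset.mem_singleton] at hiS
              exact hSne (by rw [ha, hiS])
            obtain ⟨m, hm⟩ := hpar
            omega
          rw [hc3 S h3]
          ring
      · rw [xvec_flip_notMem hiS p, xvec_neg S p, xvec_neg S (flip i p),
          xvec_flip_notMem hiS p]
        ring
    · intro h; simp at h
  have hx1 : xvec k {i} p = 1 := by simp [xvec, hp]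
  rw [hx1, mul_one] at key
  rcases hpm p with h1 | h1 <;> rcases hpm (-p) with h2 | h2 <;>
    rcases hpm (flip i p) with h3 | h3 <;> rcases hpm (-(flip i p)) with h4 | h4 <;>
    rw [h1, h2, h3, h4] at key <;>
    · first
      | (left; linarith)
      | (right; left; linarith)
      | (right; right; left; linarith)
      | (right; right; right; left; linarith)
      | (right; right; right; right; linarith)

lemma coeff_pair
    (hy : ∀ p, y p = ∑ S : Finset (Fin k), c S * xvec k S p)
    (hpm : ∀ p, y p = 1 ∨ y p = -1)
    (hc3 : ∀ S : Finset (Fin k), 3 ≤ S.card → c S = 0)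
    (i j : Fin k) (hij : i ≠ j) :
    c {i, j} = 0 ∨ c {i, j} = 1/2 ∨ c {i, j} = -(1/2) ∨ c {i, j} = 1 ∨ c {i, j} = -1 := by
  set p : DesignPoint k := fun _ => 1 with hp
  have hmemi : i ∈ ({i, j} : Finset (Fin k)) := by simp
  have hmemj : j ∈ ({i, j} : Finset (Fin k)) := by simp
  have key : y p - y (flip i p) - y (flip j p) + y (flip i (flip j p))
      = 4 * c {i, j} * xvec k {i, j} p := by
    rw [hy p, hy (flip i p), hy (flip j p), hy (flip i (flip j p))]
    rw [← Finset.sum_sub_distrib, ← Finset.sum_sub_distrib, ← Finset.sum_add_distrib]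
    rw [Finset.sum_eq_single {i, j}]
    · rw [xvec_flip_mem hmemi p, xvec_flip_mem hmemj p,
        xvec_flip_mem hmemi (flip j p), xvec_flip_mem hmemj p]
      ring
    · intro S _ hSne
      by_cases hiS : i ∈ S
      · by_cases hjS : j ∈ S
        · have h3 : 3 ≤ S.card := by
            have hsub : ({i, j} : Finset (Fin k)) ⊆ S := by
              intro a ha
              rcases Finset.mem_insert.1 ha with rfl | ha
              · exact hiS
              · rw [Finset.mem_singleton] at ha; exact ha ▸ hjS
            have hcard2 : ({i, j} : Finset (Fin k)).card = 2 := Finset.card_pair hij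
            rcases Nat.lt_or_ge S.card 3 with h | h
            · exact absurd (Finset.eq_of_subset_of_card_le hsub (by omega)).symm hSne
            · exact h
          rw [hc3 S h3]; ring
        · rw [xvec_flip_mem hiS p, xvec_flip_notMem hjS p,
            xvec_flip_mem hiS (flip j p), xvec_flip_notMem hjS p]
          ring
      · rw [xvec_flip_notMem hiS p, xvec_flip_notMem hiS (flip j p)]
        ring
    · intro h; simp at h
  have hx1 : xvec k {i, j} p = 1 := by
    unfold xvec
    apply Finset.prod_eq_one
    intro a _
    rfl
  rw [hx1, mul_one] at key
  rcases hpm p with h1 | h1 <;> rcases hpm (flip i p) with h2 | h2 <;>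
    rcases hpm (flip j p) with h3 | h3 <;> rcases hpm (flip i (flip j p)) with h4 | h4 <;>
    rw [h1, h2, h3, h4] at key <;>
    · first
      | (left; linarith)
      | (right; left; linarith)
      | (right; right; left; linarith)
      | (right; right; right; left; linarith)
      | (right; right; right; right; linarith)

lemma parseval
    (hy : ∀ p, y p = ∑ S : Finset (Fin k), c S * xvec k S p)
    (hpm : ∀ p, y p = 1 ∨ y p = -1)
    (hcS : ∀ S : Finset (Fin k), ∑ q, y q * xvec k S q = 2 ^ k * c S) :
    ∑ S : Finset (Fin k), (c S)^2 = 1 := by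
  have h1 : ∑ p, y p * y p = (2 ^ k : ℚ) := by
    have h : ∀ p : DesignPoint k, y p * y p = 1 := by
      intro p; rcases hpm p with h | h <;> rw [h] <;> norm_num
    rw [Finset.sum_congr rfl fun p _ => h p, Finset.sum_const, Finset.card_univ]
    simp
  have h2 : ∑ p, y p * y p = 2 ^ k * ∑ S : Finset (Fin k), (c S)^2 := by
    have step1 : ∀ p : DesignPoint k, y p * y p
        = ∑ S : Finset (Fin k), c S * (y p * xvec k S p) := by
      intro p
      nth_rewrite 2 [hy p]
      rw [Finset.mul_sum]
      exact Finset.sum_congr rfl fun S _ => by ring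
    rw [Finset.sum_congr rfl fun p _ => step1 p, Finset.sum_comm]
    have step2 : ∀ S : Finset (Fin k),
        ∑ p, c S * (y p * xvec k S p) = 2 ^ k * (c S)^2 := by
      intro S
      rw [← Finset.mul_sum, hcS S]
      ring
    rw [Finset.sum_congr rfl fun S _ => step2 S, ← Finset.mul_sum]
  have h2k : (2:ℚ)^k ≠ 0 := by positivity
  have h3 := h1 ▸ h2
  field_simp at h3
  linarith [h3]

end Granularity

theorem card_four_extract {α : Type*} [DecidableEq α] (s : Finset α) (h : s.card = 4) :
    ∃ a b c d : α, a ≠ b ∧ a ≠ c ∧ a ≠ d ∧ b ≠ c ∧ b ≠ d ∧ c ≠ d ∧ s = {a, b, c, d} := by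
  obtain ⟨a, ha⟩ := Finset.card_pos.1 (by omega : 0 < s.card)
  have h3 : (s.erase a).card = 3 := by rw [Finset.card_erase_of_mem ha, h]
  obtain ⟨b, c, d, hbc, hbd, hcd, habcd⟩ := Finset.card_eq_three.1 h3
  have hb : b ∈ s.erase a := by rw [habcd]; simp
  have hc : c ∈ s.erase a := by rw [habcd]; simp
  have hd : d ∈ s.erase a := by rw [habcd]; simp
  refine ⟨a, b, c, d, fun h' => (Finset.mem_erase.1 hb).1 h'.symm,
    fun h' => (Finset.mem_erase.1 hc).1 h'.symm,
    fun h' => (Finset.mem_erase.1 hd).1 h'.symm, hbc, hbd, hcd, ?_⟩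
  rw [← Finset.insert_erase ha, habcd]

theorem endgame (y : DesignPoint k → ℚ) (c : Finset (Fin k) → ℚ)
    (hy : ∀ p, y p = ∑ S : Finset (Fin k), c S * xvec k S p)
    (hpars : ∑ S : Finset (Fin k), (c S)^2 = 1)
    (hval : ∀ S, c S = 0 ∨ c S = 1/2 ∨ c S = -(1/2) ∨ c S = 1 ∨ c S = -1)
    (hsupp : ∀ S, c S ≠ 0 → S ≠ ∅ ∧ S.card ≤ 2) :
    (∃ S : Finset (Fin k), S ≠ ∅ ∧ S.card ≤ 2 ∧
      (y = xvec k S ∨ y = -xvec k S)) ∨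
    (∃ Sa Sb Sc Sd : Finset (Fin k),
      Sa ≠ ∅ ∧ Sa.card ≤ 2 ∧ Sb ≠ ∅ ∧ Sb.card ≤ 2 ∧
      Sc ≠ ∅ ∧ Sc.card ≤ 2 ∧ Sd ≠ ∅ ∧ Sd.card ≤ 2 ∧
      Sa ≠ Sb ∧ Sa ≠ Sc ∧ Sa ≠ Sd ∧ Sb ≠ Sc ∧ Sb ≠ Sd ∧ Sc ≠ Sd ∧
      ∃ ea eb ec ed : ℚ,
        (ea = 1/2 ∨ ea = -(1/2)) ∧ (eb = 1/2 ∨ eb = -(1/2)) ∧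
        (ec = 1/2 ∨ ec = -(1/2)) ∧ (ed = 1/2 ∨ ed = -(1/2)) ∧
        y = fun p =>
          ea * xvec k Sa p + eb * xvec k Sb p + ec * xvec k Sc p + ed * xvec k Sd p) := by
  classical
  set A : Finset (Finset (Fin k)) := Finset.univ.filter (fun S => c S ≠ 0) with hA_def
  have hA_c : ∀ S, S ∉ A → c S = 0 := by
    intro S hS
    by_contra hc
    exact hS (Finset.mem_filter.2 ⟨Finset.mem_univ _, hc⟩)
  have hA_mem : ∀ S, S ∈ A → c S ≠ 0 := fun S hS => (Finset.mem_filter.1 hS).2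
  have hApars : ∑ S ∈ A, (c S)^2 = 1 := by
    rw [← hpars]
    exact Finset.sum_subset (Finset.subset_univ A)
      (fun S _ hS => by rw [hA_c S hS]; ring)
  by_cases hbig : ∃ S₀ ∈ A, c S₀ = 1 ∨ c S₀ = -1
  · obtain ⟨S₀, hS₀A, hcS₀⟩ := hbig
    have hc1 : (c S₀)^2 = 1 := by rcases hcS₀ with h | h <;> rw [h] <;> norm_num
    have hrest : ∀ S, S ≠ S₀ → c S = 0 := by
      intro S hne
      by_contra hcS
      have hSA : S ∈ A := Finset.mem_filter.2 ⟨Finset.mem_univ _, hcS⟩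
      have hsub : ({S₀, S} : Finset (Finset (Fin k))) ⊆ A := by
        intro a ha
        rcases Finset.mem_insert.1 ha with rfl | ha
        · exact hS₀A
        · rw [Finset.mem_singleton] at ha; exact ha ▸ hSA
      have hle : ∑ S' ∈ ({S₀, S} : Finset (Finset (Fin k))), (c S')^2 ≤ ∑ S ∈ A, (c S)^2 :=
        Finset.sum_le_sum_of_subset_of_nonneg hsub (fun _ _ _ => sq_nonneg _)
      rw [Finset.sum_pair (fun h => hne h.symm)] at hle
      rw [hApars, hc1] at hle
      have h2 : (0:ℚ) < (c S)^2 := by positivity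
      linarith
    left
    have hcne : c S₀ ≠ 0 := hA_mem S₀ hS₀A
    refine ⟨S₀, (hsupp S₀ hcne).1, (hsupp S₀ hcne).2, ?_⟩
    have hyS : ∀ p, y p = c S₀ * xvec k S₀ p := by
      intro p
      rw [hy p, Finset.sum_eq_single S₀ (fun S _ hne => by rw [hrest S hne]; ring)
        (fun h => absurd (Finset.mem_univ S₀) h)]
    rcases hcS₀ with h | h
    · left; funext p; rw [hyS p, h, one_mul]
    · right; funext p; rw [hyS p, h, Pi.neg_apply]; ring
  · push_neg at hbig
    have hhalf : ∀ S ∈ A, c S = 1/2 ∨ c S = -(1/2) := by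
      intro S hS
      rcases hval S with h | h | h | h | h
      · exact absurd h (hA_mem S hS)
      · exact Or.inl h
      · exact Or.inr h
      · exact absurd h (hbig S hS).1
      · exact absurd h (hbig S hS).2
    have hsq : ∀ S ∈ A, (c S)^2 = 1/4 := fun S hS => by
      rcases hhalf S hS with h | h <;> rw [h] <;> norm_num
    have hcard : A.card = 4 := by
      have hs : ∑ S ∈ A, (c S)^2 = (A.card : ℚ) * (1/4) := by
        rw [Finset.sum_congr rfl hsq, Finset.sum_const, nsmul_eq_mul]
      rw [hApars] at hs
      have h4 : (A.card : ℚ) = 4 := by linarith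
      exact_mod_cast h4
    obtain ⟨Sa, Sb, Sc, Sd, hab, hac, had, hbc, hbd, hcd, hA4⟩ := card_four_extract A hcard
    have haA : Sa ∈ A := by rw [hA4]; simp
    have hbA : Sb ∈ A := by rw [hA4]; simp
    have hcA : Sc ∈ A := by rw [hA4]; simp
    have hdA : Sd ∈ A := by rw [hA4]; simp
    right
    refine ⟨Sa, Sb, Sc, Sd,
      (hsupp Sa (hA_mem Sa haA)).1, (hsupp Sa (hA_mem Sa haA)).2,
      (hsupp Sb (hA_mem Sb hbA)).1, (hsupp Sb (hA_mem Sb hbA)).2,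
      (hsupp Sc (hA_mem Sc hcA)).1, (hsupp Sc (hA_mem Sc hcA)).2,
      (hsupp Sd (hA_mem Sd hdA)).1, (hsupp Sd (hA_mem Sd hdA)).2,
      hab, hac, had, hbc, hbd, hcd,
      c Sa, c Sb, c Sc, c Sd,
      hhalf Sa haA, hhalf Sb hbA, hhalf Sc hcA, hhalf Sd hdA, ?_⟩
    funext p
    have hyA : y p = ∑ S ∈ A, c S * xvec k S p := by
      rw [hy p]
      exact (Finset.sum_subset (Finset.subset_univ A)
        (fun S _ hS => by rw [hA_c S hS]; ring)).symm
    rw [hyA, hA4]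
    rw [Finset.sum_insert (by simp [hab, hac, had]),
      Finset.sum_insert (by simp [hbc, hbd]),
      Finset.sum_insert (by simp [hcd]),
      Finset.sum_singleton]
    ring

end OAStrengthTwoAux

/-- For `t = 2`, `g ∈ G^LP` and `x ∈ B` with `x ≠ 𝟏`, either
`g·x = ±x_S` for some `S` with `1 ≤ |S| ≤ 2`, or
`g·x = ±(1/2)u_a ± (1/2)u_b ± (1/2)u_c ± (1/2)u_d` for four distinct basis
vectors `u_a, u_b, u_c, u_d ∈ B \ {𝟏}`. -/
theorem strength_two_image_form
    (k N : ℕ) (hk : 2 ≤ k) (hN : 1 ≤ N)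
    (g : Equiv.Perm (DesignPoint k)) (hg : g ∈ GLP k N 2)
    (x : DesignPoint k → ℚ)
    (hx : ∃ T : Finset (Fin k), T ≠ ∅ ∧ T.card ≤ 2 ∧ x = xvec k T) :
    (∃ S : Finset (Fin k), S ≠ ∅ ∧ S.card ≤ 2 ∧
      (permVec k g x = xvec k S ∨ permVec k g x = -xvec k S)) ∨
    (∃ Sa Sb Sc Sd : Finset (Fin k),
      Sa ≠ ∅ ∧ Sa.card ≤ 2 ∧ Sb ≠ ∅ ∧ Sb.card ≤ 2 ∧
      Sc ≠ ∅ ∧ Sc.card ≤ 2 ∧ Sd ≠ ∅ ∧ Sd.card ≤ 2 ∧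
      Sa ≠ Sb ∧ Sa ≠ Sc ∧ Sa ≠ Sd ∧ Sb ≠ Sc ∧ Sb ≠ Sd ∧ Sc ≠ Sd ∧
      ∃ ea eb ec ed : ℚ,
        (ea = 1/2 ∨ ea = -(1/2)) ∧ (eb = 1/2 ∨ eb = -(1/2)) ∧
        (ec = 1/2 ∨ ec = -(1/2)) ∧ (ed = 1/2 ∨ ed = -(1/2)) ∧
        permVec k g x = fun p =>
          ea * xvec k Sa p + eb * xvec k Sb p + ec * xvec k Sc p + ed * xvec k Sd p) := by
  classical
  obtain ⟨T, hT, hTc, rfl⟩ := hx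
  set y : DesignPoint k → ℚ := permVec k g (xvec k T) with hy_def
  have hyq : ∀ q, y q = xvec k T (g⁻¹ q) := fun q => rfl
  set c : Finset (Fin k) → ℚ := fun S => (2 ^ k : ℚ)⁻¹ * ∑ q, y q * xvec k S q with hc_def
  have hc_app : ∀ S, c S = (2 ^ k : ℚ)⁻¹ * ∑ q, y q * xvec k S q := fun S => rfl
  have h2k : (2:ℚ)^k ≠ 0 := by positivity
  have hcS : ∀ S, ∑ q, y q * xvec k S q = 2 ^ k * c S := by
    intro S
    rw [hc_app S]
    field_simp
  have hy : ∀ p, y p = ∑ S : Finset (Fin k), c S * xvec k S p := by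
    intro p
    calc y p = (2 ^ k : ℚ)⁻¹ * ∑ S : Finset (Fin k), (∑ q, y q * xvec k S q) * xvec k S p :=
          OAStrengthTwoAux.inversion y p
      _ = ∑ S : Finset (Fin k), c S * xvec k S p := by
          rw [Finset.mul_sum]
          exact Finset.sum_congr rfl fun S _ => by rw [hc_app S]; ring
  have hpm : ∀ p, y p = 1 ∨ y p = -1 := fun p => OAStrengthTwoAux.xvec_pm T (g⁻¹ p)
  have hempty : c ∅ = 0 := by
    rw [hc_app]
    have h0 : ∑ q, y q * xvec k ∅ q = 0 := by
      have hpt : ∀ q : DesignPoint k, y q * xvec k ∅ q = xvec k T (g⁻¹ q) := fun q => by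
        rw [OAStrengthTwoAux.xvec_empty, hyq, mul_one]
      rw [Finset.sum_congr rfl fun q _ => hpt q]
      exact OAStrengthTwoAux.y_sum_zero hT
    rw [h0, mul_zero]
  have hc3 : ∀ S : Finset (Fin k), 3 ≤ S.card → c S = 0 := by
    intro S hS3
    rw [hc_app]
    have h0 : ∑ q, y q * xvec k S q = ∑ q, xvec k T (g⁻¹ q) * xvec k S q :=
      Finset.sum_congr rfl fun q _ => by rw [hyq]
    rw [h0, OAStrengthTwoAux.coeff_vanish_high hN hg hT hTc hS3, mul_zero]
  have hsupp : ∀ S, c S ≠ 0 → S ≠ ∅ ∧ S.card ≤ 2 := by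
    intro S hcne
    constructor
    · intro h; exact hcne (h ▸ hempty)
    · by_contra h
      exact hcne (hc3 S (by omega))
  have hval : ∀ S, c S = 0 ∨ c S = 1/2 ∨ c S = -(1/2) ∨ c S = 1 ∨ c S = -1 := by
    intro S
    rcases Nat.lt_or_ge S.card 3 with hlt | hge
    · interval_cases hcard : S.card
      · left
        rw [Finset.card_eq_zero.1 hcard]
        exact hempty
      · obtain ⟨i, rfl⟩ := Finset.card_eq_one.1 hcard
        exact OAStrengthTwoAux.coeff_singleton y c hy hpm hc3 i
      · obtain ⟨i, j, hij, rfl⟩ := Finset.card_eq_two.1 hcard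
        exact OAStrengthTwoAux.coeff_pair y c hy hpm hc3 i j hij
    · exact Or.inl (hc3 S hge)
  have hpars : ∑ S : Finset (Fin k), (c S)^2 = 1 :=
    OAStrengthTwoAux.parseval y c hy hpm hcS
  exact OAStrengthTwoAux.endgame y c hy hpars hval hsupp
end
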